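/- arXiv:2212.13413 — 11 statements merged into one kernel-verified Lean document; each statement's English description precedes it below -/
import Mathlib

section
/- Let γ > 0, N ≥ 1, let a₀,…,a_N be real numbers and z₁,…,z_N complex numbers such that for every complex z with Re(z) > 0 one has (1/γ) ∑_{i=0}^{N} a_i/(z + i/γ) − 1 = −((z − 2/γ)/z) · (∏_{i=1}^{N}(z − z_i)) / (∏_{i=1}^{N}(z + i/γ)). Define ũ_S(z) = Γ(z) · (∏_{i=1}^{N} Γ(z + i/γ)) / (∏_{i=1}^{N} Γ(z − z_i)) (with 1/Γ interpreted as the entire reciprocal Gamma function). Then for every complex z with Re(z) > 0: −γ z ũ_S(z) + 2 ũ_S(z) = γ((1/γ) ∑_{i=0}^{N} a_i/(z + i/γ) − 1) · ũ_S(z+1). -/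
/-!
Mathlib's `Gamma` vanishes at its poles, so dividing by `Γ(w - zᵢ)` is multiplying by the entire
reciprocal Gamma function, and `1/Γ(s) = s/Γ(s+1)` holds for every `s`. Together with
`Γ(s+1) = s Γ(s)` this gives `∏ (w - zᵢ) · ũ_S(w+1) = w ∏ (w + i/γ) · ũ_S(w)` whenever `w` and the
`w + i/γ` are nonzero. Substituting the factorisation of the multiplier, the polynomial factors
cancel and the right-hand side of the Mellin equation collapses to `-γ (w - 2/γ) ũ_S(w)`.
-/

open Finset Complex

section GammaProducts

variable {ι : Type*} (s : Finset ι) (w : ℂ)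

theorem prod_Gamma_add_one_add (c : ι → ℂ) (hc : ∀ i ∈ s, w + c i ≠ 0) :
    ∏ i ∈ s, Gamma (w + 1 + c i) = (∏ i ∈ s, (w + c i)) * ∏ i ∈ s, Gamma (w + c i) := by
  rw [← prod_mul_distrib]
  refine prod_congr rfl fun i hi ↦ ?_
  rw [add_right_comm, Gamma_add_one _ (hc i hi)]

theorem inv_prod_Gamma_sub (d : ι → ℂ) :
    (∏ i ∈ s, Gamma (w - d i))⁻¹ =
      (∏ i ∈ s, (w - d i)) * (∏ i ∈ s, Gamma (w + 1 - d i))⁻¹ := by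
  rw [← prod_inv_distrib, ← prod_inv_distrib, ← prod_mul_distrib]
  refine prod_congr rfl fun i _ ↦ ?_
  rw [one_div_Gamma_eq_self_mul_one_div_Gamma_add_one, sub_add_eq_add_sub]

theorem prod_sub_mul_Gamma_mul_prod_div_prod_add_one (c d : ι → ℂ) (hw : w ≠ 0)
    (hc : ∀ i ∈ s, w + c i ≠ 0) :
    (∏ i ∈ s, (w - d i)) *
        (Gamma (w + 1) * (∏ i ∈ s, Gamma (w + 1 + c i)) / ∏ i ∈ s, Gamma (w + 1 - d i)) =
      w * (∏ i ∈ s, (w + c i)) *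
        (Gamma w * (∏ i ∈ s, Gamma (w + c i)) / ∏ i ∈ s, Gamma (w - d i)) := by
  rw [div_eq_mul_inv, div_eq_mul_inv, inv_prod_Gamma_sub s w d, Gamma_add_one w hw,
    prod_Gamma_add_one_add s w c hc]
  ring

end GammaProducts

theorem selfsimilar_profile_solves_mellin_equation_general (γ : ℝ) (hγ : 0 < γ) (N : ℕ)
    (a : ℕ → ℝ) (z : ℕ → ℂ)
    (hfact : ∀ w : ℂ, 0 < w.re →
      (1 / (γ:ℂ)) * ∑ i ∈ range (N+1), (a i : ℂ) / (w + (i:ℂ)/(γ:ℂ)) - 1 =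
        -((w - 2/(γ:ℂ)) / w) *
          (∏ i ∈ Icc 1 N, (w - z i)) / (∏ i ∈ Icc 1 N, (w + (i:ℂ)/(γ:ℂ))))
    (uS : ℂ → ℂ)
    (huS : ∀ w : ℂ, uS w = Complex.Gamma w *
        (∏ i ∈ Icc 1 N, Complex.Gamma (w + (i:ℂ)/(γ:ℂ))) /
        (∏ i ∈ Icc 1 N, Complex.Gamma (w - z i))) :
    ∀ w : ℂ, 0 < w.re →
      -(γ:ℂ) * w * uS w + 2 * uS w =
        (γ:ℂ) * ((1 / (γ:ℂ)) * ∑ i ∈ range (N+1), (a i : ℂ) / (w + (i:ℂ)/(γ:ℂ)) - 1) *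
          uS (w + 1) := by
  intro w hw
  have hγ0 : (γ:ℂ) ≠ 0 := ofReal_ne_zero.2 hγ.ne'
  have hw0 : w ≠ 0 := ne_zero_of_re_pos hw
  have hshift : ∀ i : ℕ, w + (i:ℂ)/(γ:ℂ) ≠ 0 := fun i ↦ ne_zero_of_re_pos <| by
    have : (0:ℝ) ≤ i / γ := by positivity
    simp only [add_re, div_ofReal_re, natCast_re]
    linarith
  have hrec := prod_sub_mul_Gamma_mul_prod_div_prod_add_one (Icc 1 N) w (fun i ↦ (i:ℂ)/(γ:ℂ)) z
    hw0 fun i _ ↦ hshift i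
  rw [← huS, ← huS] at hrec
  set P := ∏ i ∈ Icc 1 N, (w - z i)
  set Q := ∏ i ∈ Icc 1 N, (w + (i:ℂ)/(γ:ℂ))
  have hQ : Q ≠ 0 := prod_ne_zero_iff.2 fun i _ ↦ hshift i
  rw [hfact w hw]
  calc -(γ:ℂ) * w * uS w + 2 * uS w = γ * (-((w - 2/γ) / w)) / Q * (w * Q * uS w) := by
        field_simp
        ring
    _ = γ * (-((w - 2/γ) / w) * P / Q) * uS (w + 1) := by
        rw [← hrec]
        ring

/-- The explicit Gamma-product formula solves the stationary Mellin equation for the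
selfsimilar profile of the fragmentation equation with polynomial daughter distribution. -/
theorem selfsimilar_profile_solves_mellin_equation (γ : ℝ) (hγ : 0 < γ) (N : ℕ) (hN : 1 ≤ N)
    (a : ℕ → ℝ) (z : ℕ → ℂ)
    (hfact : ∀ w : ℂ, 0 < w.re →
      (1 / (γ:ℂ)) * ∑ i ∈ range (N+1), (a i : ℂ) / (w + (i:ℂ)/(γ:ℂ)) - 1 =
        -((w - 2/(γ:ℂ)) / w) *
          (∏ i ∈ Icc 1 N, (w - z i)) / (∏ i ∈ Icc 1 N, (w + (i:ℂ)/(γ:ℂ))))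
    (uS : ℂ → ℂ)
    (huS : ∀ w : ℂ, uS w = Complex.Gamma w *
        (∏ i ∈ Icc 1 N, Complex.Gamma (w + (i:ℂ)/(γ:ℂ))) /
        (∏ i ∈ Icc 1 N, Complex.Gamma (w - z i))) :
    ∀ w : ℂ, 0 < w.re →
      -(γ:ℂ) * w * uS w + 2 * uS w =
        (γ:ℂ) * ((1 / (γ:ℂ)) * ∑ i ∈ range (N+1), (a i : ℂ) / (w + (i:ℂ)/(γ:ℂ)) - 1) *
          uS (w + 1) :=
  selfsimilar_profile_solves_mellin_equation_general γ hγ N a z hfact uS huS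
end

section
/- Let γ > 0 and a₀ > 2, and set β = (a₀ − 2)/(2γ). Define u_S(x) = (1/Γ(β)) ∫₁^∞ s^{−a₀/(2γ)} (s−1)^{β−1} e^{−s x} ds for x > 0. Then for every complex z with Re(z) > 0: ∫₀^∞ x^{z−1} u_S(x) dx = Γ(z + 1/γ) Γ(z) / Γ(z + a₀/(2γ)). -/
/-!
Up to the factor `Γ(β)⁻¹`, `u_S` is the Laplace transform of
`g(s) = s^(-a₀/(2γ)) (s-1)^(β-1)` on `(1, ∞)`. Since `∫₀^∞ x^(z-1) e^(-sx) dx = Γ(z) s^(-z)`,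
Fubini turns the Mellin transform of a Laplace transform into `Γ(z) ∫ s^(-z) g(s) ds`, and the
substitution `s = 1/t` makes `∫₁^∞ s^(-c) (s-1)^(w-1) ds` the Beta integral `B(c - w, w)`;
here `c = z + a₀/(2γ)` and `w = β`, so `c - w = z + 1/γ`.
-/

open MeasureTheory Set Complex

lemma norm_cpow_mul_exp_neg_mul {t : ℝ} (ht : 0 < t) (a : ℂ) (r : ℝ) :
    ‖(t : ℂ) ^ (a - 1) * cexp (-(r * t))‖ = t ^ (a.re - 1) * Real.exp (-(r * t)) := by
  rw [norm_mul, norm_cpow_eq_rpow_re_of_pos ht, ← ofReal_mul, ← ofReal_neg, norm_exp_ofReal,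
    sub_re, one_re]

lemma integrableOn_cpow_mul_exp_neg_mul_Ioi {a : ℂ} {r : ℝ} (ha : 0 < a.re) (hr : 0 < r) :
    IntegrableOn (fun t : ℝ => (t : ℂ) ^ (a - 1) * cexp (-(r * t))) (Ioi 0) := by
  have hreal : IntegrableOn (fun t : ℝ => t ^ (a.re - 1) * Real.exp (-(r * t))) (Ioi 0) := by
    simpa [Real.rpow_one] using
      integrableOn_rpow_mul_exp_neg_mul_rpow (p := 1) (by linarith) one_pos hr
  refine Integrable.mono' hreal ?_ ?_
  · refine ContinuousOn.aestronglyMeasurable (fun t ht => ?_) measurableSet_Ioi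
    exact ((continuousAt_ofReal_cpow_const t _ (Or.inr ht.ne')).mul
      (by fun_prop)).continuousWithinAt
  · filter_upwards [ae_restrict_mem measurableSet_Ioi] with t ht
    exact (norm_cpow_mul_exp_neg_mul ht a r).le

lemma cpow_one_div_ofReal {s : ℝ} (hs : 0 < s) (z : ℂ) :
    (1 / (s : ℂ)) ^ z = (s : ℂ) ^ (-z) := by
  rw [one_div, inv_cpow_ofReal_nonneg hs.le, cpow_neg]

theorem mellin_integral_mul_exp_neg_mul {S : Set ℝ} (hS : MeasurableSet S) (hS0 : S ⊆ Ioi 0)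
    {g : ℝ → ℂ} (hg : AEStronglyMeasurable g (volume.restrict S)) {z : ℂ} (hz : 0 < z.re)
    (hgz : IntegrableOn (fun s : ℝ => (s : ℂ) ^ (-z) * g s) S) :
    mellin (fun x : ℝ => ∫ s in S, g s * cexp (-(s * x))) z
      = Gamma z * ∫ s in S, (s : ℂ) ^ (-z) * g s := by
  set F : ℝ → ℝ → ℂ := fun x s => g s * ((x : ℂ) ^ (z - 1) * cexp (-(s * x)))
  have hF_meas : AEStronglyMeasurable (Function.uncurry F)
      ((volume.restrict (Ioi 0)).prod (volume.restrict S)) := by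
    refine hg.comp_snd.mul ?_
    rw [Measure.prod_restrict]
    refine ContinuousOn.aestronglyMeasurable (fun p hp => ?_) (measurableSet_Ioi.prod hS)
    exact (((continuousAt_ofReal_cpow_const p.1 _ (Or.inr (ne_of_gt hp.1))).comp
      continuous_fst.continuousAt).mul (by fun_prop)).continuousWithinAt
  have hF_norm :
      ∀ s ∈ S, ∫ x in Ioi 0, ‖F x s‖ = Real.Gamma z.re * ‖(s : ℂ) ^ (-z) * g s‖ := by
    intro s hs
    have hs0 : 0 < s := hS0 hs
    simp only [F, norm_mul (g s)]
    rw [integral_const_mul, setIntegral_congr_fun measurableSet_Ioi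
      (fun x hx => norm_cpow_mul_exp_neg_mul hx z s),
      Real.integral_rpow_mul_exp_neg_mul_Ioi hz hs0, norm_mul, norm_cpow_eq_rpow_re_of_pos hs0,
      neg_re, one_div, Real.inv_rpow hs0.le, Real.rpow_neg hs0.le]
    ring
  have hF_int : Integrable (Function.uncurry F)
      ((volume.restrict (Ioi 0)).prod (volume.restrict S)) := by
    refine (integrable_prod_iff' hF_meas).2 ⟨?_, ?_⟩
    · filter_upwards [ae_restrict_mem hS] with s hs
      exact (integrableOn_cpow_mul_exp_neg_mul_Ioi hz (hS0 hs)).const_mul (g s)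
    · exact IntegrableOn.congr_fun (hgz.norm.const_mul _) (fun s hs => (hF_norm s hs).symm) hS
  have hF_inner : ∀ s ∈ S, ∫ x in Ioi 0, F x s = Gamma z * ((s : ℂ) ^ (-z) * g s) := by
    intro s hs
    simp only [F]
    rw [integral_const_mul, integral_cpow_mul_exp_neg_mul_Ioi hz (hS0 hs),
      cpow_one_div_ofReal (hS0 hs)]
    ring
  calc mellin (fun x : ℝ => ∫ s in S, g s * cexp (-(s * x))) z
      = ∫ x in Ioi 0, ∫ s in S, F x s := by
        refine setIntegral_congr_fun measurableSet_Ioi (fun x _ => ?_)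
        rw [smul_eq_mul, ← integral_const_mul]
        congr 1 with s
        ring
    _ = ∫ s in S, ∫ x in Ioi 0, F x s := integral_integral_swap hF_int
    _ = Gamma z * ∫ s in S, (s : ℂ) ^ (-z) * g s := by
        rw [setIntegral_congr_fun hS hF_inner, integral_const_mul]

lemma image_inv_Ioo_zero_one : (fun t : ℝ => t⁻¹) '' Ioo 0 1 = Ioi 1 := by
  rw [image_inv_eq_inv, inv_Ioo_0_left one_pos, inv_one]

lemma abs_deriv_inv_smul_cpow_mul_cpow_sub_one {t : ℝ} (ht : t ∈ Ioo 0 1) (c w : ℂ) :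
    |-(t ^ 2)⁻¹| • (((t⁻¹ : ℝ) : ℂ) ^ (-c) * ((t⁻¹ - 1 : ℝ) : ℂ) ^ (w - 1))
      = (t : ℂ) ^ (c - w - 1) * (1 - (t : ℂ)) ^ (w - 1) := by
  obtain ⟨ht0, ht1⟩ := ht
  have ht0' : (t : ℂ) ≠ 0 := ofReal_ne_zero.mpr ht0.ne'
  have hsq : ((|-(t ^ 2)⁻¹| : ℝ) : ℂ) = (t : ℂ) ^ (-2 : ℂ) := by
    rw [abs_neg, abs_of_pos (by positivity), cpow_neg, ofReal_inv, ofReal_pow,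
      show (2 : ℂ) = (2 : ℕ) by norm_num, cpow_natCast]
  have hsub : ((t⁻¹ - 1 : ℝ) : ℂ) = ((1 - t : ℝ) : ℂ) * ((t⁻¹ : ℝ) : ℂ) := by
    rw [← ofReal_mul]; congr 1; field_simp
  rw [real_smul, hsq, hsub, mul_cpow_ofReal_nonneg (by linarith) (by positivity), ofReal_inv,
    inv_cpow_ofReal_nonneg ht0.le, inv_cpow_ofReal_nonneg ht0.le, ← cpow_neg, ← cpow_neg,
    neg_neg, ofReal_sub, ofReal_one]
  calc (t : ℂ) ^ (-2 : ℂ) * ((t : ℂ) ^ c * ((1 - (t : ℂ)) ^ (w - 1) * (t : ℂ) ^ (-(w - 1))))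
      = ((t : ℂ) ^ (-2 : ℂ) * (t : ℂ) ^ c * (t : ℂ) ^ (-(w - 1)))
          * (1 - (t : ℂ)) ^ (w - 1) := by
        ring
    _ = (t : ℂ) ^ (c - w - 1) * (1 - (t : ℂ)) ^ (w - 1) := by
        rw [← cpow_add _ _ ht0', ← cpow_add _ _ ht0']
        ring_nf

theorem integrableOn_cpow_neg_mul_cpow_sub_one_Ioi_one {c w : ℂ} (hw : 0 < w.re)
    (hcw : 0 < (c - w).re) :
    IntegrableOn (fun s : ℝ => (s : ℂ) ^ (-c) * ((s - 1 : ℝ) : ℂ) ^ (w - 1)) (Ioi 1) := by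
  rw [← image_inv_Ioo_zero_one,
    integrableOn_image_iff_integrableOn_abs_deriv_smul measurableSet_Ioo (fun t ht =>
      (hasDerivAt_inv ht.1.ne').hasDerivWithinAt) inv_injective.injOn]
  refine IntegrableOn.congr_fun ?_
    (fun t ht => (abs_deriv_inv_smul_cpow_mul_cpow_sub_one ht c w).symm) measurableSet_Ioo
  exact (betaIntegral_convergent hcw hw).1.mono_set Ioo_subset_Ioc_self

theorem integral_cpow_neg_mul_cpow_sub_one_Ioi_one {c w : ℂ} (hw : 0 < w.re)
    (hcw : 0 < (c - w).re) :
    ∫ s in Ioi (1 : ℝ), (s : ℂ) ^ (-c) * ((s - 1 : ℝ) : ℂ) ^ (w - 1)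
      = Gamma (c - w) * Gamma w / Gamma c := by
  rw [← image_inv_Ioo_zero_one,
    integral_image_eq_integral_abs_deriv_smul measurableSet_Ioo (fun t ht =>
      (hasDerivAt_inv ht.1.ne').hasDerivWithinAt) inv_injective.injOn,
    setIntegral_congr_fun measurableSet_Ioo
      (fun t ht => abs_deriv_inv_smul_cpow_mul_cpow_sub_one ht c w),
    ← integral_Ioc_eq_integral_Ioo, ← intervalIntegral.integral_of_le zero_le_one]
  rw [← betaIntegral, betaIntegral_eq_Gamma_mul_div _ _ hcw hw, sub_add_cancel]

lemma cpow_neg_mul_rpow_mul_rpow_sub_one {s : ℝ} (hs : 1 < s) (z : ℂ) (p b : ℝ) :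
    (s : ℂ) ^ (-z) * ((s ^ (-p) * (s - 1) ^ (b - 1) : ℝ) : ℂ)
      = (s : ℂ) ^ (-(z + p)) * ((s - 1 : ℝ) : ℂ) ^ ((b : ℂ) - 1) := by
  have hs0 : (s : ℂ) ≠ 0 := ofReal_ne_zero.mpr (by linarith)
  rw [ofReal_mul, ofReal_cpow (by linarith), ofReal_cpow (by linarith), ← mul_assoc,
    ← cpow_add _ _ hs0, neg_add, ofReal_sub b, ofReal_one, ofReal_neg]

/-- Mellin transform of the selfsimilar profile for linear daughter distribution with `a₀ > 2`:
`∫₀^∞ x^{z−1} u_S(x) dx = Γ(z + 1/γ) Γ(z) / Γ(z + a₀/(2γ))` for `Re z > 0`. -/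
theorem mellin_of_selfsimilar_profile (γ a₀ : ℝ) (hγ : 0 < γ) (ha : 2 < a₀)
    (β : ℝ) (hβ : β = (a₀ - 2) / (2 * γ))
    (uS : ℝ → ℝ)
    (huS : ∀ x : ℝ, 0 < x → uS x = (1 / Real.Gamma β) *
      ∫ s in Ioi (1:ℝ), s ^ (-(a₀ / (2*γ))) * (s - 1) ^ (β - 1) * Real.exp (-(s * x))) :
    ∀ z : ℂ, 0 < z.re →
      ∫ x in Ioi (0:ℝ), (x:ℂ) ^ (z - 1) * (uS x : ℂ) =
        Complex.Gamma (z + 1/(γ:ℂ)) * Complex.Gamma z /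
          Complex.Gamma (z + (a₀:ℂ)/(2*(γ:ℂ))) := by
  intro z hz
  have hβ0 : 0 < (β : ℂ).re := by
    rw [ofReal_re, hβ]; exact div_pos (by linarith) (by linarith)
  set g : ℝ → ℂ := fun s => ((s ^ (-(a₀ / (2 * γ))) * (s - 1) ^ (β - 1) : ℝ) : ℂ)
  have hp : ((a₀ / (2 * γ) : ℝ) : ℂ) = (a₀ : ℂ) / (2 * (γ : ℂ)) := by push_cast; rfl
  have hcβ : z + (a₀ : ℂ) / (2 * (γ : ℂ)) - β = z + 1 / (γ : ℂ) := by
    rw [hβ]; push_cast; field_simp; ring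
  have hcβ_re : 0 < (z + (a₀ : ℂ) / (2 * (γ : ℂ)) - β).re := by
    rw [hcβ, add_re, ← ofReal_one, ← ofReal_div, ofReal_re]; positivity
  have hprofile : ∀ x ∈ Ioi (0 : ℝ), (x : ℂ) ^ (z - 1) * (uS x : ℂ)
      = (Real.Gamma β : ℂ)⁻¹ * ((x : ℂ) ^ (z - 1) • ∫ s in Ioi 1, g s * cexp (-(s * x))) := by
    intro x hx
    rw [huS x hx, ofReal_mul, ← integral_complex_ofReal, smul_eq_mul, one_div, ofReal_inv]
    simp only [g, ofReal_mul, ofReal_exp, ofReal_neg]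
    ring
  have hkernel : ∀ s ∈ Ioi (1 : ℝ), (s : ℂ) ^ (-z) * g s
      = (s : ℂ) ^ (-(z + (a₀ : ℂ) / (2 * (γ : ℂ)))) * ((s - 1 : ℝ) : ℂ) ^ ((β : ℂ) - 1) :=
    fun s hs => hp ▸ cpow_neg_mul_rpow_mul_rpow_sub_one hs z _ β
  have hg_int : IntegrableOn (fun s : ℝ => (s : ℂ) ^ (-z) * g s) (Ioi 1) :=
    (integrableOn_cpow_neg_mul_cpow_sub_one_Ioi_one hβ0 hcβ_re).congr_fun
      (fun s hs => (hkernel s hs).symm) measurableSet_Ioi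
  rw [setIntegral_congr_fun measurableSet_Ioi hprofile, integral_const_mul]
  change (Real.Gamma β : ℂ)⁻¹ * mellin _ z = _
  rw [mellin_integral_mul_exp_neg_mul measurableSet_Ioi (Ioi_subset_Ioi zero_le_one)
      (by fun_prop : Measurable g).aestronglyMeasurable hz hg_int,
    setIntegral_congr_fun measurableSet_Ioi hkernel,
    integral_cpow_neg_mul_cpow_sub_one_Ioi_one hβ0 hcβ_re, hcβ, ← Gamma_ofReal]
  have hΓβ : Gamma (β : ℂ) ≠ 0 := Gamma_ne_zero_of_re_pos hβ0
  field_simp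
end

section
/- Let γ > 0 and a₀ > 2, set β = (a₀ − 2)/(2γ), and define u_S(x) = (1/Γ(β)) ∫₁^∞ s^{−a₀/(2γ)} (s−1)^{β−1} e^{−s x} ds for x > 0. Then e^{x} x^{β} u_S(x) − 1 = O(1/x) as x → ∞; that is, there exist constants C > 0 and x₀ > 0 such that |e^{x} x^{β} u_S(x) − 1| ≤ C/x for all x ≥ x₀. -/
/-! The substitution `s = 1 + t / x` turns the integral into `e^{-x} x^{-β}` times the Gamma
integral `∫₀^∞ e^{-t} t^{β-1} dt` weighted by `(1 + t/x)^{-p}`, `p = a₀ / (2γ)`. By Bernoulli's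
inequality this weight differs from `1` by at most `p t / x`, so the error is bounded by
`(p / x) Γ(β + 1) = p β Γ(β) / x`. -/

open MeasureTheory Set

theorem integral_comp_add_right_Ioi {E : Type*} [NormedAddCommGroup E] [NormedSpace ℝ E]
    (g : ℝ → E) (a b : ℝ) : ∫ x in Ioi a, g (x + b) = ∫ x in Ioi (a + b), g x := by
  rw [← integral_indicator measurableSet_Ioi, ← integral_indicator measurableSet_Ioi,
    ← integral_add_right_eq_self (fun x => (Ioi (a + b)).indicator g x) b]
  congr 1
  ext x
  simp [indicator_apply]

theorem integral_Ioi_one_rpow_mul_exp_eq (p β : ℝ) {x : ℝ} (hx : 0 < x) :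
    ∫ s in Ioi (1:ℝ), s ^ (-p) * (s - 1) ^ (β - 1) * Real.exp (-(s * x)) =
      Real.exp (-x) * x ^ (-β) *
        ∫ t in Ioi (0:ℝ), (1 + t / x) ^ (-p) * (Real.exp (-t) * t ^ (β - 1)) := by
  set G : ℝ → ℝ := fun u => (u + 1) ^ (-p) * u ^ (β - 1) * Real.exp (-((u + 1) * x))
  calc _ = ∫ u in Ioi (0:ℝ), G u := by
        have hshift := integral_comp_add_right_Ioi
          (fun s => s ^ (-p) * (s - 1) ^ (β - 1) * Real.exp (-(s * x))) 0 1
        rw [zero_add] at hshift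
        simp only [← hshift, G, add_sub_cancel_right]
    _ = x⁻¹ * ∫ t in Ioi (0:ℝ), G (t * x⁻¹) := by
        rw [integral_comp_mul_right_Ioi _ _ (inv_pos.2 hx), zero_mul, inv_inv, smul_eq_mul,
          inv_mul_cancel_left₀ hx.ne']
    _ = _ := by
        rw [← integral_const_mul, ← integral_const_mul]
        refine setIntegral_congr_fun measurableSet_Ioi fun t ht => ?_
        have hxt : (t * x⁻¹ + 1) * x = x + t := by field_simp; ring
        have hscale : x⁻¹ * (t * x⁻¹) ^ (β - 1) = x ^ (-β) * t ^ (β - 1) := by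
          rw [Real.mul_rpow (le_of_lt ht) (inv_pos.2 hx).le, Real.inv_rpow hx.le,
            ← Real.rpow_neg hx.le, show -β = -(β - 1) - 1 by ring, Real.rpow_sub_one hx.ne']
          ring
        simp only [G, hxt, neg_add, Real.exp_add]
        rw [show t * x⁻¹ + 1 = 1 + t / x by ring]
        linear_combination (1 + t / x) ^ (-p) * Real.exp (-x) * Real.exp (-t) * hscale

theorem one_sub_mul_le_one_add_rpow_neg {p u : ℝ} (hp : 0 ≤ p) (hu : 0 ≤ u) :
    1 - p * u ≤ (1 + u) ^ (-p) := by
  have hlog : Real.log (1 + u) ≤ u := by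
    linarith [Real.log_le_sub_one_of_pos (by linarith : 0 < 1 + u)]
  calc 1 - p * u ≤ 1 - p * Real.log (1 + u) := by gcongr
    _ ≤ Real.exp (-(p * Real.log (1 + u))) := Real.one_sub_le_exp_neg _
    _ = (1 + u) ^ (-p) := by rw [Real.rpow_def_of_pos (by linarith)]; ring_nf

theorem abs_one_add_rpow_neg_sub_one_le {p u : ℝ} (hp : 0 ≤ p) (hu : 0 ≤ u) :
    |(1 + u) ^ (-p) - 1| ≤ p * u := by
  have hle : (1 + u) ^ (-p) ≤ 1 :=
    Real.rpow_le_one_of_one_le_of_nonpos (by linarith) (by linarith)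
  rw [abs_of_nonpos (by linarith)]
  linarith [one_sub_mul_le_one_add_rpow_neg hp hu]

theorem abs_integral_mul_gammaIntegrand_sub_Gamma_le {β c : ℝ} (hβ : 0 < β) {w : ℝ → ℝ}
    (hw : Measurable w) (hwc : ∀ t > 0, |w t - 1| ≤ c * t) :
    |(∫ t in Ioi (0:ℝ), w t * (Real.exp (-t) * t ^ (β - 1))) - Real.Gamma β| ≤
      c * Real.Gamma (β + 1) := by
  have hg := Real.GammaIntegral_convergent hβ
  have hg₁ := (Real.GammaIntegral_convergent (by linarith : 0 < β + 1)).const_mul c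
  have hdom : ∀ᵐ t ∂volume.restrict (Ioi (0:ℝ)),
      ‖(w t - 1) * (Real.exp (-t) * t ^ (β - 1))‖ ≤ c * (Real.exp (-t) * t ^ (β + 1 - 1)) := by
    refine (ae_restrict_iff' measurableSet_Ioi).mpr (ae_of_all _ fun t (ht : 0 < t) => ?_)
    rw [norm_mul, Real.norm_eq_abs, Real.norm_of_nonneg (by positivity),
      show β + 1 - 1 = β - 1 + 1 by ring, Real.rpow_add_one ht.ne']
    calc |w t - 1| * (Real.exp (-t) * t ^ (β - 1)) ≤ c * t * (Real.exp (-t) * t ^ (β - 1)) := by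
          gcongr; exact hwc t ht
      _ = c * (Real.exp (-t) * (t ^ (β - 1) * t)) := by ring
  have hint : IntegrableOn (fun t => (w t - 1) * (Real.exp (-t) * t ^ (β - 1))) (Ioi 0) :=
    hg₁.mono' ((hw.sub_const 1).mul (by fun_prop)).aestronglyMeasurable hdom
  have hsplit : ∫ t in Ioi (0:ℝ), w t * (Real.exp (-t) * t ^ (β - 1)) =
      (∫ t in Ioi (0:ℝ), (w t - 1) * (Real.exp (-t) * t ^ (β - 1))) + Real.Gamma β := by
    rw [Real.Gamma_eq_integral hβ, ← integral_add hint hg]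
    congr 1 with t
    ring
  rw [hsplit, add_sub_cancel_right, ← Real.norm_eq_abs, Real.Gamma_eq_integral (by linarith),
    ← integral_const_mul]
  exact norm_integral_le_of_norm_le hg₁ hdom

/-- Asymptotic behaviour of the selfsimilar profile: `u_S(x) = e^{−x} x^{−β}(1 + O(1/x))`
as `x → ∞`, i.e. `e^x x^β u_S(x) − 1 = O(1/x)`. -/
theorem selfsimilar_profile_asymptotics (γ a₀ : ℝ) (hγ : 0 < γ) (ha : 2 < a₀)
    (β : ℝ) (hβ : β = (a₀ - 2) / (2 * γ))
    (uS : ℝ → ℝ)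
    (huS : ∀ x : ℝ, 0 < x → uS x = (1 / Real.Gamma β) *
      ∫ s in Ioi (1:ℝ), s ^ (-(a₀ / (2*γ))) * (s - 1) ^ (β - 1) * Real.exp (-(s * x))) :
    ∃ C > 0, ∃ x₀ > 0, ∀ x ≥ x₀, |Real.exp x * x ^ β * uS x - 1| ≤ C / x := by
  set p := a₀ / (2 * γ)
  have hp : 0 < p := by positivity
  have hβ₀ : 0 < β := hβ ▸ div_pos (by linarith) (by positivity)
  have hΓ : 0 < Real.Gamma β := Real.Gamma_pos_of_pos hβ₀
  refine ⟨p * β, by positivity, 1, one_pos, fun x hx => ?_⟩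
  have hx₀ : 0 < x := one_pos.trans_le hx
  have hw : ∀ t > 0, |(1 + t / x) ^ (-p) - 1| ≤ p / x * t := fun t ht =>
    (abs_one_add_rpow_neg_sub_one_le hp.le (div_nonneg ht.le hx₀.le)).trans_eq (by ring)
  have hI := abs_integral_mul_gammaIntegrand_sub_Gamma_le hβ₀ (by fun_prop) hw
  have hnorm : Real.exp x * x ^ β * uS x - 1 =
      ((∫ t in Ioi (0:ℝ), (1 + t / x) ^ (-p) * (Real.exp (-t) * t ^ (β - 1))) - Real.Gamma β) /
        Real.Gamma β := by
    rw [huS x hx₀, integral_Ioi_one_rpow_mul_exp_eq p β hx₀, Real.exp_neg, Real.rpow_neg hx₀.le]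
    field_simp
  rw [hnorm, abs_div, abs_of_pos hΓ, div_le_iff₀ hΓ]
  calc _ ≤ p / x * Real.Gamma (β + 1) := hI
    _ = p * β / x * Real.Gamma β := by rw [Real.Gamma_add_one hβ₀.ne']; ring
end

section
/- Let γ > 0, let n ≥ 1 be a natural number, and let f(x) = x^{2/γ} e^{−x} for x > 0. Then ∫₀^∞ x^{n−1} f^{(n)}(x) dx = 0, where f^{(n)} denotes the n-th derivative of f on (0,∞). -/
/-!
For `f(x) = x^a e^{-x}` the Leibniz rule writes `f^{(m)}` as a combination of the functions
`x^(a-j) e^{-x}`, so every moment `∫₀^∞ x^(s-1) f^{(m)}(x) dx` is the same combination of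
values `Γ(s + a - j)`. On these combinations `Γ(z+1) = z Γ(z)` plays the role of integration
by parts and yields the Mellin rule `∫₀^∞ x^(s+m-1) f^{(m)} = (-1)^m s(s+1)⋯(s+m-1) Γ(s+a)`.
At `s = 0` the Pochhammer factor vanishes as soon as `m ≥ 1`.
-/

open MeasureTheory Set

namespace RpowMulExpNeg

open Finset (range)
open Real (exp Gamma)

-- The sign is `(-1)^(m-j)`, written with `m + j` to avoid truncated subtraction.
noncomputable def coeff (a : ℝ) (m j : ℕ) : ℝ :=
  (-1) ^ (m + j) * m.choose j * (descPochhammer ℝ j).eval a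

lemma coeff_succ_zero (a : ℝ) (m : ℕ) : coeff a (m + 1) 0 = -coeff a m 0 := by
  simp [coeff, pow_succ]

lemma coeff_succ_succ (a : ℝ) (m j : ℕ) :
    coeff a (m + 1) (j + 1) = coeff a m j * (a - j) - coeff a m (j + 1) := by
  simp only [coeff, descPochhammer_succ_eval, Nat.choose_succ_succ, Nat.cast_add]
  ring

lemma coeff_self_add_one (a : ℝ) (m : ℕ) : coeff a m (m + 1) = 0 := by
  simp [coeff]

/-- Mirrors `(x^(a-j) e^{-x})' = (a-j) x^(a-(j+1)) e^{-x} - x^(a-j) e^{-x}`. -/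
lemma sum_coeff_succ_mul (a : ℝ) (m : ℕ) (φ : ℕ → ℝ) :
    ∑ j ∈ range (m + 2), coeff a (m + 1) j * φ j =
      ∑ j ∈ range (m + 1), coeff a m j * ((a - j) * φ (j + 1) - φ j) := by
  have hshift : ∑ j ∈ range (m + 1), coeff a m (j + 1) * φ (j + 1) + coeff a m 0 * φ 0 =
      ∑ j ∈ range (m + 1), coeff a m j * φ j := by
    rw [← Finset.sum_range_succ' (fun j => coeff a m j * φ j), Finset.sum_range_succ,
      coeff_self_add_one, zero_mul, add_zero]
  simp only [mul_sub, Finset.sum_sub_distrib]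
  rw [Finset.sum_range_succ', ← hshift]
  simp only [coeff_succ_succ, coeff_succ_zero, sub_mul, Finset.sum_sub_distrib, mul_assoc]
  ring

noncomputable def derivFormula (a : ℝ) (m : ℕ) (x : ℝ) : ℝ :=
  ∑ j ∈ range (m + 1), coeff a m j * (x ^ (a - j) * exp (-x))

lemma hasDerivAt_rpow_sub_mul_exp_neg (a : ℝ) (j : ℕ) {x : ℝ} (hx : 0 < x) :
    HasDerivAt (fun y => y ^ (a - j) * exp (-y))
      ((a - j) * (x ^ (a - (j + 1 : ℕ)) * exp (-x)) - x ^ (a - j) * exp (-x)) x := by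
  have hexp : HasDerivAt (fun y => exp (-y)) (-exp (-x)) x := by
    simpa using (hasDerivAt_neg x).exp
  refine ((Real.hasDerivAt_rpow_const (p := a - j) (Or.inl hx.ne')).fun_mul hexp).congr_deriv ?_
  rw [Nat.cast_succ, ← sub_sub]
  ring

lemma hasDerivAt_derivFormula (a : ℝ) (m : ℕ) {x : ℝ} (hx : 0 < x) :
    HasDerivAt (derivFormula a m) (derivFormula a (m + 1) x) x := by
  rw [derivFormula, sum_coeff_succ_mul]
  exact HasDerivAt.fun_sum fun j _ => (hasDerivAt_rpow_sub_mul_exp_neg a j hx).const_mul _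

lemma iteratedDerivWithin_eqOn_derivFormula (a : ℝ) (m : ℕ) :
    EqOn (iteratedDerivWithin m (fun y => y ^ a * exp (-y)) (Ioi 0)) (derivFormula a m)
      (Ioi 0) := by
  induction m with
  | zero => intro x _; simp [derivFormula, coeff]
  | succ m ih =>
    intro x hx
    have hnhds : iteratedDerivWithin m (fun y => y ^ a * exp (-y)) (Ioi 0) =ᶠ[nhds x]
        derivFormula a m := Filter.eventuallyEq_of_mem (isOpen_Ioi.mem_nhds hx) ih
    rw [iteratedDerivWithin_succ, derivWithin_of_isOpen isOpen_Ioi hx, hnhds.deriv_eq,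
      (hasDerivAt_derivFormula a m hx).deriv]

lemma rpow_sub_one_mul_rpow_mul_exp_neg_eqOn (s b : ℝ) :
    EqOn (fun x => x ^ (s - 1) * (x ^ b * exp (-x))) (fun x => exp (-x) * x ^ (s + b - 1))
      (Ioi 0) := by
  intro x hx
  simp only
  rw [← mul_assoc, ← Real.rpow_add hx, sub_add_eq_add_sub, mul_comm]

lemma integrableOn_rpow_sub_one_mul_rpow_mul_exp_neg {s b : ℝ} (h : 0 < s + b) :
    IntegrableOn (fun x => x ^ (s - 1) * (x ^ b * exp (-x))) (Ioi 0) :=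
  (Real.GammaIntegral_convergent h).congr_fun
    (rpow_sub_one_mul_rpow_mul_exp_neg_eqOn s b).symm measurableSet_Ioi

lemma integral_rpow_sub_one_mul_rpow_mul_exp_neg {s b : ℝ} (h : 0 < s + b) :
    ∫ x in Ioi 0, x ^ (s - 1) * (x ^ b * exp (-x)) = Gamma (s + b) := by
  rw [Real.Gamma_eq_integral h,
    setIntegral_congr_fun measurableSet_Ioi (rpow_sub_one_mul_rpow_mul_exp_neg_eqOn s b)]

/-- `∫₀^∞ x^(s-1) f^{(m)}(x) dx` for `f(x) = x^a e^{-x}`, evaluated termwise. -/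
noncomputable def gammaMoment (a : ℝ) (m : ℕ) (s : ℝ) : ℝ :=
  ∑ j ∈ range (m + 1), coeff a m j * Gamma (s + (a - j))

lemma integral_rpow_sub_one_mul_derivFormula {a s : ℝ} {m : ℕ} (h : (m : ℝ) < s + a) :
    ∫ x in Ioi 0, x ^ (s - 1) * derivFormula a m x = gammaMoment a m s := by
  have hpos : ∀ j ∈ range (m + 1), 0 < s + (a - j) := fun j hj => by
    have : (j : ℝ) ≤ m := by exact_mod_cast Finset.mem_range_succ_iff.mp hj
    linarith
  simp only [derivFormula, Finset.mul_sum, mul_left_comm _ (coeff a m _)]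
  rw [integral_finsetSum _ fun j hj =>
    (integrableOn_rpow_sub_one_mul_rpow_mul_exp_neg (hpos j hj)).const_mul _]
  refine Finset.sum_congr rfl fun j hj => ?_
  rw [integral_const_mul, integral_rpow_sub_one_mul_rpow_mul_exp_neg (hpos j hj)]

/-- Integration by parts `∫ x^s f^{(m+1)} = -s ∫ x^(s-1) f^{(m)}`, on the coefficients. -/
lemma gammaMoment_succ {a s : ℝ} {m : ℕ} (h : (m : ℝ) < s + a) :
    gammaMoment a (m + 1) (s + 1) = -s * gammaMoment a m s := by
  rw [gammaMoment, sum_coeff_succ_mul, gammaMoment, Finset.mul_sum]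
  refine Finset.sum_congr rfl fun j hj => ?_
  have hj : (j : ℝ) ≤ m := by exact_mod_cast Finset.mem_range_succ_iff.mp hj
  have hshift : s + 1 + (a - (j + 1 : ℕ)) = s + (a - j) := by push_cast; ring
  rw [hshift, add_right_comm, Real.Gamma_add_one (by linarith)]
  ring

/-- The Mellin transform rule for `m`-th derivatives. -/
lemma gammaMoment_add {a s : ℝ} (h : 0 < s + a) (m : ℕ) :
    gammaMoment a m (s + m) = (-1) ^ m * (ascPochhammer ℝ m).eval s * Gamma (s + a) := by
  induction m with
  | zero => simp [gammaMoment, coeff]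
  | succ m ih =>
    rw [Nat.cast_succ, ← add_assoc, gammaMoment_succ (by linarith), ih,
      ascPochhammer_succ_eval]
    ring

end RpowMulExpNeg

/-- Each eigenfunction `U_n` (`n ≥ 1`) carries zero mass:
`∫₀^∞ x^{n−1} (d/dx)^n (x^{2/γ} e^{−x}) dx = 0`. -/
theorem eigenfunction_zero_mass (γ : ℝ) (hγ : 0 < γ) (n : ℕ) (hn : 1 ≤ n) :
    ∫ x in Ioi (0:ℝ), x ^ (n - 1) *
        iteratedDerivWithin n (fun y : ℝ => y ^ (2/γ) * Real.exp (-y)) (Ioi 0) x = 0 := by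
  open RpowMulExpNeg in
  have ha : 0 < 2 / γ := by positivity
  have hintegrand : EqOn
      (fun x => x ^ (n - 1) *
        iteratedDerivWithin n (fun y : ℝ => y ^ (2/γ) * Real.exp (-y)) (Ioi 0) x)
      (fun x => x ^ ((n : ℝ) - 1) * derivFormula (2 / γ) n x) (Ioi 0) := fun x hx => by
    dsimp only
    rw [iteratedDerivWithin_eqOn_derivFormula _ n hx, ← Real.rpow_natCast, Nat.cast_sub hn,
      Nat.cast_one]
  rw [setIntegral_congr_fun measurableSet_Ioi hintegrand,
    integral_rpow_sub_one_mul_derivFormula (by linarith), ← zero_add (n : ℝ),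
    gammaMoment_add (by simpa) n, ascPochhammer_eval_zero, if_neg (by omega)]
  simp
end

section
/- Let N ≥ 1 and let a₁,…,a_N, b₁,…,b_N ∈ ℂ be such that for every i, neither Re(a_i) nor Re(b_i) is a nonpositive integer. Set S = ∑_{i=1}^N Re(a_i − b_i). Then there exists C > 0 such that for all λ ∈ ℝ: C^{-1} (1 + λ²)^{S/2} ≤ |∏_{i=1}^N Γ(a_i + iλ) / ∏_{i=1}^N Γ(b_i + iλ)| ≤ C (1 + λ²)^{S/2}. -/
/-!
For real `x`, Euler's product makes
`x ↦ log (|Γ(x + iμ)|² / Γ(x)²) = ∑ₖ log ((x + k)² / ((x + k)² + μ²))` concave, and this function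
is known exactly at `x = 1/2` (reflection formula: `|Γ(1/2 + iμ)|² = π / cosh πμ`) and at `x = 3/2`
(functional equation). Squeezing it between chords through these two anchors gives
`|Γ(x + iμ)|² ≍ e^{-π|μ|} (1 + μ²)^{x - 1/2}` uniformly in `μ` for `x ∈ [1/2, 3/2]`, and the
functional equation carries this to every `x` that is not a pole. Translating `μ` by `Im a` changes
both factors by bounded amounts, so `|Γ(a + iλ)|²` has the same size with `x = Re a`; in a quotient
with as many Gamma factors above as below, the factors `e^{-π|λ|}` cancel.
-/

open Finset Real Filter Topology Asymptotics

theorem ConcaveOn.of_tendsto {ι : Type*} {l : Filter ι} [l.NeBot] {s : Set ℝ}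
    {F : ι → ℝ → ℝ} {f : ℝ → ℝ} (hs : Convex ℝ s) (hF : ∀ i, ConcaveOn ℝ s (F i))
    (hlim : ∀ x ∈ s, Tendsto (fun i => F i x) l (𝓝 (f x))) :
    ConcaveOn ℝ s f := by
  refine ⟨hs, fun x hx y hy a b ha hb hab => ?_⟩
  exact le_of_tendsto_of_tendsto ((((hlim x hx).const_smul a).add ((hlim y hy).const_smul b)))
    (hlim _ (hs hx hy ha hb hab)) (Eventually.of_forall fun i => (hF i).2 hx hy ha hb hab)

theorem ConcaveOn.secant_le {s : Set ℝ} {f : ℝ → ℝ} (hf : ConcaveOn ℝ s f) {x y z : ℝ}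
    (hx : x ∈ s) (hz : z ∈ s) (hxy : x ≤ y) (hyz : y ≤ z) :
    (z - y) * f x + (y - x) * f z ≤ (z - x) * f y := by
  rcases hxy.eq_or_lt with rfl | hxy
  · simp only [sub_self, zero_mul, add_zero, le_refl]
  rcases hyz.eq_or_lt with rfl | hyz
  · simp only [sub_self, zero_mul, zero_add, le_refl]
  have := hf.neg.secant_mono_aux1 hx hz hxy hyz
  simp only [Pi.neg_apply] at this
  linarith

theorem Asymptotics.IsTheta.exists_pos_two_sided_bound_top {α E F : Type*}
    [SeminormedAddCommGroup E] [SeminormedAddCommGroup F] {f : α → E} {g : α → F}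
    (h : f =Θ[⊤] g) :
    ∃ C > 0, ∀ x, C⁻¹ * ‖g x‖ ≤ ‖f x‖ ∧ ‖f x‖ ≤ C * ‖g x‖ := by
  obtain ⟨c₁, hc₁, h₁⟩ := h.1.exists_pos
  obtain ⟨c₂, hc₂, h₂⟩ := h.2.exists_pos
  rw [isBigOWith_top] at h₁ h₂
  refine ⟨max c₁ c₂, lt_max_of_lt_left hc₁, fun x => ⟨?_, (h₁ x).trans ?_⟩⟩
  · rw [inv_mul_le_iff₀ (lt_max_of_lt_left hc₁)]
    exact (h₂ x).trans (by gcongr; exact le_max_right _ _)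
  · gcongr
    exact le_max_left _ _

theorem abs_log_cosh_sub_abs_le (x : ℝ) : |log (cosh x) - (|x|)| ≤ log 2 := by
  have hexp : exp (-|x|) ≤ exp |x| := exp_le_exp.2 (by linarith [abs_nonneg x])
  have hcosh : cosh x = (exp |x| + exp (-|x|)) / 2 := by rw [← cosh_abs, cosh_eq]
  have hlow : exp |x| / 2 ≤ cosh x := by rw [hcosh]; linarith [exp_pos (-|x|)]
  have hup : cosh x ≤ exp |x| := by rw [hcosh]; linarith
  have h1 := log_le_log (by positivity) hlow
  have h2 := log_le_log (cosh_pos x) hup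
  rw [log_div (exp_pos _).ne' two_ne_zero, log_exp] at h1
  rw [log_exp] at h2
  rw [abs_le]
  constructor <;> linarith [log_nonneg one_le_two]

theorem one_add_sq_add_le (y l : ℝ) : 1 + (y + l) ^ 2 ≤ 2 * (1 + y ^ 2) * (1 + l ^ 2) := by
  nlinarith [sq_nonneg (y - l), sq_nonneg (y * l)]

theorem isTheta_one_add_sq_comp_add (y : ℝ) :
    (fun l : ℝ => 1 + (y + l) ^ 2) =Θ[⊤] fun l => 1 + l ^ 2 := by
  refine ⟨isBigO_top.2 ⟨2 * (1 + y ^ 2), fun l => ?_⟩,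
    isBigO_top.2 ⟨2 * (1 + y ^ 2), fun l => ?_⟩⟩ <;>
    rw [norm_of_nonneg (by positivity), norm_of_nonneg (by positivity)]
  · exact one_add_sq_add_le y l
  · simpa using one_add_sq_add_le (-y) (y + l)

theorem isTheta_sq_add_sq_one_add_sq {x : ℝ} (hx : x ≠ 0) :
    (fun μ : ℝ => x ^ 2 + μ ^ 2) =Θ[⊤] fun μ => 1 + μ ^ 2 := by
  have hx2 : 0 < x ^ 2 := by positivity
  refine ⟨isBigO_top.2 ⟨x ^ 2 + 1, fun μ => ?_⟩, isBigO_top.2 ⟨(x ^ 2)⁻¹ + 1, fun μ => ?_⟩⟩ <;>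
    rw [norm_of_nonneg (by positivity), norm_of_nonneg (by positivity)]
  · nlinarith [mul_nonneg hx2.le (sq_nonneg μ)]
  · have : 1 ≤ (x ^ 2)⁻¹ * (x ^ 2 + μ ^ 2) := by
      rw [inv_mul_eq_div, one_le_div hx2]
      linarith [sq_nonneg μ]
    rw [add_mul, one_mul]
    linarith

theorem norm_Gamma_add_one_add_mul_I_sq {x : ℝ} (hx : x ≠ 0) (μ : ℝ) :
    ‖Complex.Gamma ((x + 1 : ℝ) + μ * Complex.I)‖ ^ 2 =
      (x ^ 2 + μ ^ 2) * ‖Complex.Gamma (x + μ * Complex.I)‖ ^ 2 := by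
  have hne : (x : ℂ) + μ * Complex.I ≠ 0 := by
    intro h
    exact hx (by simpa using congrArg Complex.re h)
  rw [Complex.ofReal_add, Complex.ofReal_one, add_right_comm, Complex.Gamma_add_one _ hne,
    norm_mul, mul_pow, Complex.sq_norm, Complex.normSq_add_mul_I]

theorem norm_Gamma_one_half_add_mul_I_sq (μ : ℝ) :
    ‖Complex.Gamma ((1 / 2 : ℝ) + μ * Complex.I)‖ ^ 2 = π / cosh (π * μ) := by
  set s : ℂ := (1 / 2 : ℝ) + μ * Complex.I
  have hconj : (starRingEnd ℂ) s = 1 - s := by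
    simp only [s, map_add, map_mul, Complex.conj_ofReal, Complex.conj_I]
    push_cast
    ring
  have hsin : Complex.sin (π * s) = cosh (π * μ) := by
    rw [show (π : ℂ) * s = (π * μ : ℝ) * Complex.I + π / 2 by push_cast [s]; ring,
      Complex.sin_add_pi_div_two, Complex.cos_mul_I, Complex.ofReal_cosh]
  have h := Complex.Gamma_mul_Gamma_one_sub s
  rw [← hconj, Complex.Gamma_conj, Complex.mul_conj, Complex.normSq_eq_norm_sq, hsin] at h
  exact_mod_cast h

theorem tendsto_prod_sq_div_sq_add_sq {x : ℝ} (hx : 0 < x) (μ : ℝ) :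
    Tendsto (fun n : ℕ => ∏ j ∈ range (n + 1), (x + j) ^ 2 / ((x + j) ^ 2 + μ ^ 2)) atTop
      (𝓝 (‖Complex.Gamma (x + μ * Complex.I)‖ ^ 2 / Real.Gamma x ^ 2)) := by
  have hlim := ((Complex.GammaSeq_tendsto_Gamma (x + μ * Complex.I)).norm.pow 2).div
    ((Real.GammaSeq_tendsto_Gamma x).pow 2) (pow_ne_zero 2 (Real.Gamma_pos_of_pos hx).ne')
  refine hlim.congr' ?_
  filter_upwards [eventually_ge_atTop 1] with n hn
  have hterm (j : ℕ) : ‖(x : ℂ) + μ * Complex.I + j‖ ^ 2 = (x + j) ^ 2 + μ ^ 2 := by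
    rw [Complex.sq_norm, ← Complex.normSq_add_mul_I]
    push_cast
    ring_nf
  simp only [Pi.div_apply, Complex.GammaSeq, Real.GammaSeq, norm_div, norm_mul, norm_prod,
    Complex.norm_natCast_cpow_of_pos hn, Complex.norm_natCast, div_pow, mul_pow, ← prod_pow,
    hterm, prod_div_distrib, Complex.add_re, Complex.ofReal_re, Complex.re_ofReal_mul,
    Complex.I_re, mul_zero, add_zero]
  field_simp

theorem concaveOn_log_sq_div_sq_add_sq (μ : ℝ) :
    ConcaveOn ℝ (Set.Ioi 0) fun u : ℝ => log (u ^ 2 / (u ^ 2 + μ ^ 2)) := by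
  have hderiv : ∀ u ∈ Set.Ioi (0 : ℝ), HasDerivAt (fun u : ℝ => log (u ^ 2 / (u ^ 2 + μ ^ 2)))
      (2 * μ ^ 2 / (u * (u ^ 2 + μ ^ 2))) u := by
    intro u (hu : 0 < u)
    have hq : HasDerivAt (fun u : ℝ => u ^ 2 / (u ^ 2 + μ ^ 2))
        ((2 * u * (u ^ 2 + μ ^ 2) - u ^ 2 * (2 * u)) / (u ^ 2 + μ ^ 2) ^ 2) u := by
      simpa using (hasDerivAt_pow 2 u).fun_div ((hasDerivAt_pow 2 u).add_const (μ ^ 2))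
        (by positivity)
    convert hq.log (by positivity) using 1
    field_simp
    ring
  refine AntitoneOn.concaveOn_of_deriv (convex_Ioi 0)
    (fun u hu => (hderiv u hu).continuousAt.continuousWithinAt)
    (fun u hu => (hderiv u (interior_subset hu)).differentiableAt.differentiableWithinAt) ?_
  rw [interior_Ioi]
  intro u (hu : 0 < u) v (hv : 0 < v) huv
  rw [(hderiv u hu).deriv, (hderiv v hv).deriv]
  gcongr

theorem normSq_Gamma_div_sq_pos {x : ℝ} (hx : 0 < x) (μ : ℝ) :
    0 < ‖Complex.Gamma (x + μ * Complex.I)‖ ^ 2 / Real.Gamma x ^ 2 := by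
  have := Complex.Gamma_ne_zero_of_re_pos (s := x + μ * Complex.I) (by simpa using hx)
  have := Real.Gamma_pos_of_pos hx
  positivity

noncomputable def logGammaRatio (μ x : ℝ) : ℝ :=
  log (‖Complex.Gamma (x + μ * Complex.I)‖ ^ 2 / Real.Gamma x ^ 2)

theorem concaveOn_logGammaRatio (μ : ℝ) : ConcaveOn ℝ (Set.Ioi 0) (logGammaRatio μ) := by
  have hterm (j : ℕ) :
      ConcaveOn ℝ (Set.Ioi 0) fun x : ℝ => log ((x + j) ^ 2 / ((x + j) ^ 2 + μ ^ 2)) :=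
    ((concaveOn_log_sq_div_sq_add_sq μ).translate_left (j : ℝ)).subset
      (fun x (hx : 0 < x) => show 0 < (j : ℝ) + x by positivity) (convex_Ioi 0)
  refine ConcaveOn.of_tendsto (l := atTop) (convex_Ioi 0)
    (F := fun n => ∑ j ∈ range (n + 1), fun x : ℝ => log ((x + j) ^ 2 / ((x + j) ^ 2 + μ ^ 2)))
    (fun n => sum_induction _ (ConcaveOn ℝ (Set.Ioi 0)) (fun _ _ => ConcaveOn.add)
      (concaveOn_const 0 (convex_Ioi 0)) fun j _ => hterm j) fun x (hx : 0 < x) => ?_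
  refine ((tendsto_prod_sq_div_sq_add_sq hx μ).log
    (normSq_Gamma_div_sq_pos hx μ).ne').congr fun n => ?_
  have hxj (j : ℕ) : 0 < x + j := by positivity
  rw [Finset.sum_apply, log_prod fun j _ => (div_pos (pow_pos (hxj j) 2) (by positivity)).ne']

theorem logGammaRatio_add_one {x : ℝ} (hx : 0 < x) (μ : ℝ) :
    logGammaRatio μ (x + 1) = logGammaRatio μ x + log (1 + (μ / x) ^ 2) := by
  rw [logGammaRatio, logGammaRatio, norm_Gamma_add_one_add_mul_I_sq hx.ne',
    Real.Gamma_add_one hx.ne', ← log_mul (normSq_Gamma_div_sq_pos hx μ).ne' (by positivity)]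
  congr 1
  field_simp

theorem logGammaRatio_one_half (μ : ℝ) : logGammaRatio μ (1 / 2) = -log (cosh (π * μ)) := by
  rw [logGammaRatio, norm_Gamma_one_half_add_mul_I_sq, Real.Gamma_one_half_eq, sq_sqrt pi_pos.le,
    div_div_cancel_left' pi_ne_zero, log_inv]

theorem abs_logGammaRatio_sub_le {t : ℝ} (ht : t ∈ Set.Icc (1 / 2 : ℝ) (3 / 2)) (μ : ℝ) :
    |logGammaRatio μ t - logGammaRatio μ (1 / 2) - (t - 1 / 2) * log (1 + (2 * μ) ^ 2)|
      ≤ log 9 := by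
  obtain ⟨ht₁, ht₂⟩ := ht
  have ht₀ : 0 < t := by linarith
  have hφ := concaveOn_logGammaRatio μ
  have hhalf : logGammaRatio μ (3 / 2) = logGammaRatio μ (1 / 2) + log (1 + (2 * μ) ^ 2) := by
    rw [show (3 / 2 : ℝ) = 1 / 2 + 1 by norm_num, logGammaRatio_add_one one_half_pos]
    congr 3
    field_simp
  -- the chord over `[1/2, 3/2]` bounds the value at `t` from below; the chord over `[1/2, t + 1]`
  -- bounds the value at `t + 1`, hence at `t` by the recurrence, from above
  have hlow := hφ.secant_le (show (1 / 2 : ℝ) ∈ Set.Ioi 0 by norm_num)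
    (show (3 / 2 : ℝ) ∈ Set.Ioi 0 by norm_num) ht₁ ht₂
  have hup := hφ.secant_le (show (1 / 2 : ℝ) ∈ Set.Ioi 0 by norm_num)
    (show t + 1 ∈ Set.Ioi 0 by simp only [Set.mem_Ioi]; linarith)
    (by norm_num : (1 / 2 : ℝ) ≤ 3 / 2) (by linarith : (3 / 2 : ℝ) ≤ t + 1)
  rw [logGammaRatio_add_one ht₀, hhalf] at hup
  rw [hhalf] at hlow
  have hlog9 : log (1 + (2 * μ) ^ 2) ≤ log 9 + log (1 + (μ / t) ^ 2) := by
    rw [← log_mul (by norm_num) (by positivity)]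
    refine log_le_log (by positivity) ?_
    have : (2 * μ) ^ 2 ≤ 9 * (μ / t) ^ 2 := by
      rw [div_pow, mul_div_assoc', le_div_iff₀ (by positivity)]
      nlinarith [sq_nonneg μ, mul_le_mul ht₂ ht₂ ht₀.le (by norm_num : (0 : ℝ) ≤ 3 / 2)]
    linarith
  rw [abs_le]
  constructor <;> linarith [log_nonneg (by norm_num : (1 : ℝ) ≤ 9)]

noncomputable def stirlingWeight (x μ : ℝ) : ℝ := exp (-(π * |μ|)) * (1 + μ ^ 2) ^ (x - 1 / 2)

theorem stirlingWeight_add_one (x μ : ℝ) :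
    stirlingWeight (x + 1) μ = (1 + μ ^ 2) * stirlingWeight x μ := by
  rw [stirlingWeight, stirlingWeight, add_sub_right_comm, rpow_add (by positivity), rpow_one]
  ring

theorem stirlingWeight_div_stirlingWeight (x y μ : ℝ) :
    stirlingWeight x μ / stirlingWeight y μ = ((1 + μ ^ 2) ^ ((x - y) / 2)) ^ 2 := by
  have hQ : 0 < 1 + μ ^ 2 := by positivity
  rw [stirlingWeight, stirlingWeight, mul_div_mul_left _ _ (exp_ne_zero _), ← rpow_sub hQ,
    ← rpow_mul_natCast hQ.le]
  congr 1
  push_cast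
  ring

theorem isTheta_stirlingWeight_comp_add (x y : ℝ) :
    (fun l => stirlingWeight x (y + l)) =Θ[⊤] stirlingWeight x := by
  have hexp : (fun l : ℝ => exp (-(π * |y + l|))) =Θ[⊤] fun l => exp (-(π * |l|)) := by
    refine isTheta_exp_comp_exp_comp.2 (isBoundedUnder_of (f := ⊤) ⟨π * |y|, fun l => ?_⟩)
    rw [show -(π * |y + l|) - -(π * |l|) = π * (|l| - |y + l|) by ring, abs_mul,
      abs_of_pos pi_pos]
    have := abs_abs_sub_abs_le l (y + l)
    rw [show l - (y + l) = -y by ring, abs_neg] at this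
    exact mul_le_mul_of_nonneg_left this pi_pos.le
  exact hexp.mul ((isTheta_one_add_sq_comp_add y).rpow (Eventually.of_forall fun l => by positivity)
    (Eventually.of_forall fun l => by positivity))

theorem isTheta_normSq_Gamma_of_mem_Icc {t : ℝ} (ht : t ∈ Set.Icc (1 / 2 : ℝ) (3 / 2)) :
    (fun μ : ℝ => ‖Complex.Gamma (t + μ * Complex.I)‖ ^ 2) =Θ[⊤] stirlingWeight t := by
  have ht₀ : 0 < t := by linarith [ht.1]
  have hΓ : 0 < Real.Gamma t := Real.Gamma_pos_of_pos ht₀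
  have hbound (μ : ℝ) : |logGammaRatio μ t - (-(π * |μ|) + (t - 1 / 2) * log (1 + μ ^ 2))|
      ≤ log 9 + log 2 + log 4 := by
    have hconc := abs_le.1 (abs_logGammaRatio_sub_le ht μ)
    have hcosh := abs_le.1 (abs_log_cosh_sub_abs_le (π * μ))
    rw [logGammaRatio_one_half] at hconc
    rw [abs_mul, abs_of_pos pi_pos] at hcosh
    have hL₁ : log (1 + μ ^ 2) ≤ log (1 + (2 * μ) ^ 2) :=
      log_le_log (by positivity) (by nlinarith)
    have hL₂ : log (1 + (2 * μ) ^ 2) ≤ log 4 + log (1 + μ ^ 2) := by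
      rw [← log_mul (by norm_num) (by positivity)]
      exact log_le_log (by positivity) (by nlinarith)
    rw [abs_le]
    constructor <;> nlinarith [ht.1, ht.2, log_nonneg (by norm_num : (1 : ℝ) ≤ 2)]
  have hexp := isTheta_exp_comp_exp_comp.2 (isBoundedUnder_of (f := ⊤) ⟨_, hbound⟩)
  have hlhs : (fun μ : ℝ => ‖Complex.Gamma (t + μ * Complex.I)‖ ^ 2) =
      fun μ => Real.Gamma t ^ 2 * exp (logGammaRatio μ t) := funext fun μ => by
    rw [logGammaRatio, exp_log (normSq_Gamma_div_sq_pos ht₀ μ)]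
    field_simp
  have hrhs : stirlingWeight t =
      fun μ => exp (-(π * |μ|) + (t - 1 / 2) * log (1 + μ ^ 2)) := funext fun μ => by
    rw [stirlingWeight, exp_add, rpow_def_of_pos (by positivity), mul_comm (log _)]
  rw [hlhs, hrhs]
  exact hexp.const_mul_left (pow_ne_zero 2 hΓ.ne')

theorem isTheta_normSq_Gamma_add_one_iff {x : ℝ} (hx : x ≠ 0) :
    (fun μ : ℝ => ‖Complex.Gamma ((x + 1 : ℝ) + μ * Complex.I)‖ ^ 2) =Θ[⊤]
        stirlingWeight (x + 1) ↔
      (fun μ : ℝ => ‖Complex.Gamma (x + μ * Complex.I)‖ ^ 2) =Θ[⊤] stirlingWeight x := by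
  have hrec : (fun μ : ℝ => ‖Complex.Gamma ((x + 1 : ℝ) + μ * Complex.I)‖ ^ 2) =
      fun μ : ℝ => (x ^ 2 + μ ^ 2) * ‖Complex.Gamma (x + μ * Complex.I)‖ ^ 2 :=
    funext (norm_Gamma_add_one_add_mul_I_sq hx)
  have hw : stirlingWeight (x + 1) = fun μ : ℝ => (1 + μ ^ 2) * stirlingWeight x μ :=
    funext (stirlingWeight_add_one x)
  rw [hrec, hw]
  have hq := isTheta_sq_add_sq_one_add_sq hx
  refine ⟨fun h => ?_, hq.mul⟩
  refine EventuallyEq.trans_isTheta (Eventually.of_forall fun μ => ?_)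
    ((h.div hq).trans_eventuallyEq (Eventually.of_forall fun μ => ?_)) <;> field_simp

theorem isTheta_normSq_Gamma_add_nat {x : ℝ} (hx : 0 < x)
    (h : (fun μ : ℝ => ‖Complex.Gamma (x + μ * Complex.I)‖ ^ 2) =Θ[⊤] stirlingWeight x) (n : ℕ) :
    (fun μ : ℝ => ‖Complex.Gamma ((x + n : ℝ) + μ * Complex.I)‖ ^ 2) =Θ[⊤]
      stirlingWeight (x + n) := by
  induction n with
  | zero => simpa using h
  | succ n ih =>
    rw [Nat.cast_succ, ← add_assoc]
    exact (isTheta_normSq_Gamma_add_one_iff (by positivity)).2 ih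

theorem isTheta_normSq_Gamma_of_add_nat {x : ℝ} (hx : ∀ m : ℕ, x ≠ -m) (n : ℕ)
    (h : (fun μ : ℝ => ‖Complex.Gamma ((x + n : ℝ) + μ * Complex.I)‖ ^ 2) =Θ[⊤]
      stirlingWeight (x + n)) :
    (fun μ : ℝ => ‖Complex.Gamma (x + μ * Complex.I)‖ ^ 2) =Θ[⊤] stirlingWeight x := by
  induction n generalizing x with
  | zero => simpa using h
  | succ n ih =>
    have hx₀ : x ≠ 0 := by simpa using hx 0
    refine (isTheta_normSq_Gamma_add_one_iff hx₀).1 (ih (fun m hm => hx (m + 1) ?_) ?_)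
    · push_cast; linarith
    · rwa [Nat.cast_succ, add_comm (n : ℝ), ← add_assoc] at h

theorem isTheta_normSq_Gamma {x : ℝ} (hx : ∀ m : ℕ, x ≠ -m) :
    (fun μ : ℝ => ‖Complex.Gamma (x + μ * Complex.I)‖ ^ 2) =Θ[⊤] stirlingWeight x := by
  -- go up from the base interval to `y = t + ⌊y - 1/2⌋₊`, then down from `y` to `x`
  set y := x + ⌈1 / 2 - x⌉₊
  have hy : 1 / 2 ≤ y := by linarith [Nat.le_ceil (1 / 2 - x)]
  set t := y - ⌊y - 1 / 2⌋₊
  have ht : t ∈ Set.Icc (1 / 2 : ℝ) (3 / 2) :=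
    ⟨by linarith [Nat.floor_le (sub_nonneg.2 hy)], by linarith [Nat.lt_floor_add_one (y - 1 / 2)]⟩
  refine isTheta_normSq_Gamma_of_add_nat hx ⌈1 / 2 - x⌉₊ ?_
  have := isTheta_normSq_Gamma_add_nat (by linarith [ht.1]) (isTheta_normSq_Gamma_of_mem_Icc ht)
    ⌊y - 1 / 2⌋₊
  rwa [sub_add_cancel] at this

theorem isTheta_normSq_Gamma_add_I_mul {a : ℂ} (ha : ∀ m : ℕ, a.re ≠ -m) :
    (fun l : ℝ => ‖Complex.Gamma (a + Complex.I * l)‖ ^ 2) =Θ[⊤] stirlingWeight a.re := by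
  have hshift : (fun l : ℝ => ‖Complex.Gamma (a + Complex.I * l)‖ ^ 2) =
      fun l => ‖Complex.Gamma (a.re + (a.im + l : ℝ) * Complex.I)‖ ^ 2 := by
    funext l
    congr 3
    apply Complex.ext <;> simp
  have h := isTheta_normSq_Gamma ha
  have h' : (fun l : ℝ => ‖Complex.Gamma (a.re + (a.im + l : ℝ) * Complex.I)‖ ^ 2) =Θ[⊤]
      fun l => stirlingWeight a.re (a.im + l) :=
    ⟨h.1.comp_tendsto tendsto_top, h.2.comp_tendsto tendsto_top⟩
  rw [hshift]
  exact h'.trans (isTheta_stirlingWeight_comp_add a.re a.im)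

theorem isTheta_Gamma_div_Gamma {a b : ℂ} (ha : ∀ m : ℕ, a.re ≠ -m) (hb : ∀ m : ℕ, b.re ≠ -m) :
    (fun l : ℝ => Complex.Gamma (a + Complex.I * l) / Complex.Gamma (b + Complex.I * l)) =Θ[⊤]
      fun l => (1 + l ^ 2) ^ ((a - b).re / 2) := by
  have hsq : (fun l : ℝ =>
      ‖(Complex.Gamma (a + Complex.I * l) / Complex.Gamma (b + Complex.I * l)) ^ 2‖) =Θ[⊤]
        fun l => ((1 + l ^ 2) ^ ((a - b).re / 2)) ^ 2 := by
    simpa only [norm_pow, norm_div, div_pow, stirlingWeight_div_stirlingWeight, Complex.sub_re]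
      using (isTheta_normSq_Gamma_add_I_mul ha).div (isTheta_normSq_Gamma_add_I_mul hb)
  rw [isTheta_norm_left] at hsq
  exact ⟨hsq.1.of_pow two_ne_zero, hsq.2.of_pow two_ne_zero⟩

theorem gamma_product_quotient_two_sided_bound_general (N : ℕ) (a b : ℕ → ℂ)
    (ha : ∀ i ∈ Icc 1 N, ∀ n : ℕ, (a i).re ≠ -(n:ℝ))
    (hb : ∀ i ∈ Icc 1 N, ∀ n : ℕ, (b i).re ≠ -(n:ℝ)) :
    ∃ C > 0, ∀ lam : ℝ,
      C⁻¹ * (1 + lam ^ 2) ^ ((∑ i ∈ Icc 1 N, (a i - b i).re) / 2) ≤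
        ‖(∏ i ∈ Icc 1 N, Complex.Gamma (a i + Complex.I * lam)) /
            (∏ i ∈ Icc 1 N, Complex.Gamma (b i + Complex.I * lam))‖ ∧
      ‖(∏ i ∈ Icc 1 N, Complex.Gamma (a i + Complex.I * lam)) /
          (∏ i ∈ Icc 1 N, Complex.Gamma (b i + Complex.I * lam))‖ ≤
        C * (1 + lam ^ 2) ^ ((∑ i ∈ Icc 1 N, (a i - b i).re) / 2) := by
  have h := IsTheta.finsetProd fun i hi => isTheta_Gamma_div_Gamma (ha i hi) (hb i hi)
  simp only [prod_div_distrib, ← rpow_sum_of_pos (show (0 : ℝ) < 1 + _ ^ 2 by positivity),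
    ← sum_div] at h
  obtain ⟨C, hC, hbound⟩ := h.exists_pos_two_sided_bound_top
  refine ⟨C, hC, fun lam => ?_⟩
  simpa only [norm_of_nonneg (rpow_nonneg (by positivity : (0 : ℝ) ≤ 1 + lam ^ 2) _)]
    using hbound lam

/-- Two-sided bound for quotients of products of Gamma functions on vertical lines:
`C⁻¹ (1+λ²)^{S/2} ≤ |∏ Γ(a_i + iλ) / ∏ Γ(b_i + iλ)| ≤ C (1+λ²)^{S/2}` with
`S = ∑ Re(a_i − b_i)`. -/
theorem gamma_product_quotient_two_sided_bound (N : ℕ) (hN : 1 ≤ N) (a b : ℕ → ℂ)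
    (ha : ∀ i ∈ Icc 1 N, ∀ n : ℕ, (a i).re ≠ -(n:ℝ))
    (hb : ∀ i ∈ Icc 1 N, ∀ n : ℕ, (b i).re ≠ -(n:ℝ)) :
    ∃ C > 0, ∀ lam : ℝ,
      C⁻¹ * (1 + lam ^ 2) ^ ((∑ i ∈ Icc 1 N, (a i - b i).re) / 2) ≤
        ‖(∏ i ∈ Icc 1 N, Complex.Gamma (a i + Complex.I * lam)) /
            (∏ i ∈ Icc 1 N, Complex.Gamma (b i + Complex.I * lam))‖ ∧
      ‖(∏ i ∈ Icc 1 N, Complex.Gamma (a i + Complex.I * lam)) /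
          (∏ i ∈ Icc 1 N, Complex.Gamma (b i + Complex.I * lam))‖ ≤
        C * (1 + lam ^ 2) ^ ((∑ i ∈ Icc 1 N, (a i - b i).re) / 2) :=
  gamma_product_quotient_two_sided_bound_general N a b ha hb
end

section
/- Let γ > 0 with 2/γ not an integer, and write 2/γ = k + δ with k = ⌊2/γ⌋ and δ ∈ (0,1). For a nonnegative measurable function u₀ on (0,∞) define v₀(x) = (1/(x^δ Γ(δ))) ∫_x^∞ (1 − x/y)^{δ−1} y^{δ−1} u₀(y) dy (with values in [0,∞]). Then there exists a constant C > 0, depending only on γ, such that for every integer m ≥ 0: ∫₀^∞ x^{m + 2/γ} v₀(x)² dx ≤ C ∫₀^∞ x^{m + 2/γ} u₀(x)² dx, and consequently ∫₀^∞ e^{x} x^{2/γ} v₀(x)² dx ≤ C ∫₀^∞ e^{x} x^{2/γ} u₀(x)² dx (all integrals taken in [0,∞]). -/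
/-!
Substituting `y = x (1 + s)` turns `v₀` into the multiplicative convolution
`Γ(δ)⁻¹ ∫₀^∞ s^(δ-1) u₀(x (1 + s)) ds`. Cauchy–Schwarz against the weight `(1 + s)^(±σ)`,
Tonelli, and the dilation identity `∫ x^p f(c x) dx = c^(-p-1) ∫ x^p f(x) dx` bound this
operator on `L²(x^p dx)` by `B(δ, σ - δ)²` with `σ = (p + 1) / 2`. This decreases in `p` and is
finite at `p = 2/γ` since `δ < 1 ≤ k + 1`; the exponential weight is the series `Σ x^m / m!`
of these power weights.
-/

open MeasureTheory Set ENNReal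
open scoped Nat

lemma fract_lt_add_one_div_two {R : Type*} [Field R] [LinearOrder R] [IsStrictOrderedRing R]
    [FloorRing R] {a : R} (ha : 0 ≤ a) : Int.fract a < (a + 1) / 2 := by
  have hfloor : (0 : R) ≤ ⌊a⌋ := by exact_mod_cast Int.floor_nonneg.2 ha
  linarith [Int.fract_lt_one a, Int.self_sub_floor a]

lemma lintegral_Ioi_eq_ofReal_mul_lintegral_comp {a : ℝ} (ha : 0 < a) (b : ℝ) (g : ℝ → ℝ≥0∞) :
    ∫⁻ y in Ioi b, g y = ENNReal.ofReal a * ∫⁻ s in Ioi 0, g (b + a * s) := by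
  have himage : (fun s => b + a * s) '' Ioi 0 = Ioi b := by
    rw [show (fun s => b + a * s) = (b + ·) ∘ (a * ·) from rfl, image_comp,
      image_mul_left_Ioi ha, mul_zero, image_const_add_Ioi, add_zero]
  have hderiv : ∀ s ∈ Ioi (0 : ℝ), HasDerivWithinAt (fun s => b + a * s) a (Ioi 0) s :=
    fun s _ => by simpa using ((hasDerivAt_id s).const_mul a).const_add b |>.hasDerivWithinAt
  have hinj : InjOn (fun s => b + a * s) (Ioi 0) :=
    fun s _ t _ h => mul_left_cancel₀ ha.ne' (add_left_cancel h)
  rw [← himage, lintegral_image_eq_lintegral_abs_deriv_mul measurableSet_Ioi hderiv hinj,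
    abs_of_pos ha, lintegral_const_mul' _ _ ofReal_ne_top]

lemma lintegral_Ioi_rpow_mul_comp_mul {c : ℝ} (hc : 0 < c) (p : ℝ) (f : ℝ → ℝ≥0∞) :
    ∫⁻ x in Ioi 0, ENNReal.ofReal (x ^ p) * f (x * c)
      = ENNReal.ofReal (c ^ (-(p + 1))) * ∫⁻ y in Ioi 0, ENNReal.ofReal (y ^ p) * f y := by
  conv_rhs => rw [lintegral_Ioi_eq_ofReal_mul_lintegral_comp hc 0, ← mul_assoc,
    ← ofReal_mul (by positivity), ← lintegral_const_mul' _ _ ofReal_ne_top]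
  refine setLIntegral_congr_fun measurableSet_Ioi fun x hx => ?_
  have hx : 0 < x := hx
  rw [zero_add, mul_comm c x, ← mul_assoc, ← ofReal_mul (by positivity),
    Real.mul_rpow hx.le hc.le]
  congr 2
  rw [Real.rpow_neg hc.le, Real.rpow_add_one hc.ne']
  field_simp

lemma sq_lintegral_mul_le_mul_lintegral {α : Type*} [MeasurableSpace α] {μ : Measure α}
    {k f w : α → ℝ≥0∞} (hk : AEMeasurable k μ) (hf : AEMeasurable f μ) (hw : AEMeasurable w μ)
    (hw0 : ∀ᵐ a ∂μ, w a ≠ 0) (hw_top : ∀ᵐ a ∂μ, w a ≠ ∞) :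
    (∫⁻ a, k a * f a ∂μ) ^ 2 ≤ (∫⁻ a, k a / w a ∂μ) * ∫⁻ a, k a * w a * f a ^ 2 ∂μ := by
  have hsplit : ∀ᵐ a ∂μ,
      k a * f a = (k a / w a) ^ (2⁻¹ : ℝ) * (k a * w a * f a ^ 2) ^ (2⁻¹ : ℝ) := by
    filter_upwards [hw0, hw_top] with a h0 htop
    have hsq : k a / w a * (k a * w a * f a ^ 2) = (k a * f a) ^ 2 := by
      calc k a / w a * (k a * w a * f a ^ 2) = (w a)⁻¹ * w a * (k a * f a) ^ 2 := by
            rw [div_eq_mul_inv]; ring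
        _ = (k a * f a) ^ 2 := by rw [ENNReal.inv_mul_cancel h0 htop, one_mul]
    rw [← ENNReal.mul_rpow_of_nonneg _ _ (by norm_num), hsq, ← ENNReal.rpow_natCast,
      ← ENNReal.rpow_mul]
    norm_num
  calc (∫⁻ a, k a * f a ∂μ) ^ 2
      = (∫⁻ a, (k a / w a) ^ (2⁻¹ : ℝ) * (k a * w a * f a ^ 2) ^ (2⁻¹ : ℝ) ∂μ) ^ 2 := by
        rw [lintegral_congr_ae hsplit]
    _ ≤ ((∫⁻ a, k a / w a ∂μ) ^ (2⁻¹ : ℝ) * (∫⁻ a, k a * w a * f a ^ 2 ∂μ) ^ (2⁻¹ : ℝ)) ^ 2 := by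
        gcongr
        exact lintegral_mul_norm_pow_le (hk.div hw) ((hk.mul hw).mul (hf.pow_const 2))
          (by norm_num) (by norm_num) (by norm_num)
    _ = (∫⁻ a, k a / w a ∂μ) * ∫⁻ a, k a * w a * f a ^ 2 ∂μ := by
        rw [mul_pow, ← ENNReal.rpow_natCast, ← ENNReal.rpow_natCast, ← ENNReal.rpow_mul,
          ← ENNReal.rpow_mul]
        norm_num

noncomputable def fracCorrection (δ : ℝ) (u : ℝ → ℝ≥0∞) (x : ℝ) : ℝ≥0∞ :=
  ∫⁻ s in Ioi 0, ENNReal.ofReal (s ^ (δ - 1)) * u (x * (1 + s))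

/-- `kernelMoment δ σ = B(δ, σ - δ)`. -/
noncomputable def kernelMoment (δ σ : ℝ) : ℝ≥0∞ :=
  ∫⁻ s in Ioi 0, ENNReal.ofReal (s ^ (δ - 1) * (1 + s) ^ (-σ))

lemma ofReal_mul_lintegral_Ioi_eq_fracCorrection {δ x : ℝ} (hx : 0 < x) (u : ℝ → ℝ≥0∞) :
    ENNReal.ofReal (1 / (x ^ δ * Real.Gamma δ)) *
        ∫⁻ y in Ioi x, ENNReal.ofReal ((1 - x / y) ^ (δ - 1) * y ^ (δ - 1)) * u y
      = ENNReal.ofReal (Real.Gamma δ)⁻¹ * fracCorrection δ u x := by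
  have hkernel : ∀ s ∈ Ioi (0 : ℝ),
      (1 - x / (x + x * s)) ^ (δ - 1) * (x + x * s) ^ (δ - 1) = x ^ (δ - 1) * s ^ (δ - 1) := by
    intro s (hs : 0 < s)
    have h : 1 - x / (x + x * s) = s / (1 + s) := by field_simp; ring
    rw [h, ← mul_one_add, Real.div_rpow hs.le (by linarith), Real.mul_rpow hx.le (by linarith)]
    field_simp [(Real.rpow_pos_of_pos (by linarith : 0 < 1 + s) (δ - 1)).ne']
  have hintegrand : ∀ s ∈ Ioi (0 : ℝ),
      ENNReal.ofReal ((1 - x / (x + x * s)) ^ (δ - 1) * (x + x * s) ^ (δ - 1)) * u (x + x * s)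
        = ENNReal.ofReal (x ^ (δ - 1)) * (ENNReal.ofReal (s ^ (δ - 1)) * u (x * (1 + s))) := by
    intro s hs
    rw [hkernel s hs, mul_one_add, ofReal_mul (by positivity), mul_assoc]
  rw [lintegral_Ioi_eq_ofReal_mul_lintegral_comp hx x,
    setLIntegral_congr_fun measurableSet_Ioi hintegrand, lintegral_const_mul' _ _ ofReal_ne_top,
    fracCorrection, ← mul_assoc, ← mul_assoc, ← ofReal_mul' hx.le,
    ← ofReal_mul' (by positivity)]
  congr 2
  rw [Real.rpow_sub_one hx.ne']
  field_simp

lemma measurable_fracCorrection (δ : ℝ) {u : ℝ → ℝ≥0∞} (hu : Measurable u) :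
    Measurable (fracCorrection δ u) :=
  Measurable.lintegral_prod_right'
    (f := fun z : ℝ × ℝ => ENNReal.ofReal (z.2 ^ (δ - 1)) * u (z.1 * (1 + z.2))) (by fun_prop)

lemma fracCorrection_sq_le (δ σ : ℝ) {u : ℝ → ℝ≥0∞} (hu : Measurable u) (x : ℝ) :
    fracCorrection δ u x ^ 2 ≤ kernelMoment δ σ *
      ∫⁻ s in Ioi 0, ENNReal.ofReal (s ^ (δ - 1) * (1 + s) ^ σ) * u (x * (1 + s)) ^ 2 := by
  have hs1 : ∀ s ∈ Ioi (0 : ℝ), 0 < 1 + s := fun s hs => by linarith [mem_Ioi.1 hs]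
  have hw : ∀ s ∈ Ioi (0 : ℝ), 0 < (1 + s) ^ σ := fun s hs => Real.rpow_pos_of_pos (hs1 s hs) σ
  refine (sq_lintegral_mul_le_mul_lintegral (w := fun s => ENNReal.ofReal ((1 + s) ^ σ))
    (by fun_prop) (by fun_prop) (by fun_prop)
    (ae_restrict_of_forall_mem measurableSet_Ioi fun s hs => (ofReal_pos.2 (hw s hs)).ne')
    (ae_of_all _ fun _ => ofReal_ne_top)).trans_eq ?_
  congr 1
  · refine setLIntegral_congr_fun measurableSet_Ioi fun s hs => ?_
    rw [Real.rpow_neg (hs1 s hs).le, ← div_eq_mul_inv, ofReal_div_of_pos (hw s hs)]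
  · refine setLIntegral_congr_fun measurableSet_Ioi fun s hs => ?_
    rw [ofReal_mul (Real.rpow_nonneg (le_of_lt hs) _)]

lemma lintegral_rpow_mul_fracCorrection_sq_le (δ p : ℝ) {u : ℝ → ℝ≥0∞} (hu : Measurable u) :
    ∫⁻ x in Ioi 0, ENNReal.ofReal (x ^ p) * fracCorrection δ u x ^ 2
      ≤ kernelMoment δ ((p + 1) / 2) ^ 2 * ∫⁻ x in Ioi 0, ENNReal.ofReal (x ^ p) * u x ^ 2 := by
  set σ := (p + 1) / 2
  set K := kernelMoment δ σ
  set N := ∫⁻ x in Ioi 0, ENNReal.ofReal (x ^ p) * u x ^ 2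
  set G : ℝ → ℝ → ℝ≥0∞ := fun x s =>
    ENNReal.ofReal (s ^ (δ - 1) * (1 + s) ^ σ) * (ENNReal.ofReal (x ^ p) * u (x * (1 + s)) ^ 2)
  have hG : Measurable (Function.uncurry G) := by
    simp only [G, Function.uncurry_def]; fun_prop
  have hinner : ∀ s ∈ Ioi (0 : ℝ), ∫⁻ x in Ioi 0, G x s
      = ENNReal.ofReal (s ^ (δ - 1) * (1 + s) ^ (-σ)) * N := by
    intro s (hs : 0 < s)
    have hs1 : 0 < 1 + s := by linarith
    rw [lintegral_const_mul' _ _ ofReal_ne_top,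
      lintegral_Ioi_rpow_mul_comp_mul hs1 p (fun y => u y ^ 2), ← mul_assoc,
      ← ofReal_mul (mul_nonneg (Real.rpow_nonneg hs.le _) (Real.rpow_nonneg hs1.le _)), mul_assoc,
      ← Real.rpow_add hs1]
    congr 4
    ring
  calc ∫⁻ x in Ioi 0, ENNReal.ofReal (x ^ p) * fracCorrection δ u x ^ 2
      ≤ ∫⁻ x in Ioi 0, K * ∫⁻ s in Ioi 0, G x s := by
        refine lintegral_mono fun x => ?_
        calc ENNReal.ofReal (x ^ p) * fracCorrection δ u x ^ 2
            ≤ ENNReal.ofReal (x ^ p) * (K * ∫⁻ s in Ioi 0,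
                ENNReal.ofReal (s ^ (δ - 1) * (1 + s) ^ σ) * u (x * (1 + s)) ^ 2) := by
              gcongr
              exact fracCorrection_sq_le δ σ hu x
          _ = K * ∫⁻ s in Ioi 0, G x s := by
              rw [mul_left_comm, ← lintegral_const_mul' _ _ ofReal_ne_top]
              exact congrArg _ (lintegral_congr fun s => mul_left_comm _ _ _)
    _ = K * ∫⁻ s in Ioi 0, ∫⁻ x in Ioi 0, G x s := by
        rw [lintegral_const_mul K (f := fun x => ∫⁻ s in Ioi 0, G x s) hG.lintegral_prod_right',
          lintegral_lintegral_swap hG.aemeasurable]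
    _ = K * ∫⁻ s in Ioi 0, ENNReal.ofReal (s ^ (δ - 1) * (1 + s) ^ (-σ)) * N := by
        rw [setLIntegral_congr_fun measurableSet_Ioi hinner]
    _ = K ^ 2 * N := by
        rw [lintegral_mul_const _ (by fun_prop), sq, mul_assoc]; rfl

lemma kernelMoment_antitone (δ : ℝ) : Antitone (kernelMoment δ) := fun σ σ' hσ =>
  setLIntegral_mono' measurableSet_Ioi fun s (hs : 0 < s) => ofReal_le_ofReal <|
    mul_le_mul_of_nonneg_left
      (Real.rpow_le_rpow_of_exponent_le (by linarith) (neg_le_neg hσ)) (Real.rpow_nonneg hs.le _)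

lemma kernelMoment_lt_top {δ σ : ℝ} (hδ : 0 < δ) (hσ : δ < σ) : kernelMoment δ σ < ∞ := by
  rw [kernelMoment, ← Ioc_union_Ioi_eq_Ioi zero_le_one,
    lintegral_union measurableSet_Ioi (Ioc_disjoint_Ioi le_rfl)]
  refine add_lt_top.2 ⟨?_, ?_⟩
  · have hint : IntegrableOn (fun s : ℝ => s ^ (δ - 1)) (Ioc 0 1) :=
      (intervalIntegrable_iff_integrableOn_Ioc_of_le zero_le_one).1
        (intervalIntegral.intervalIntegrable_rpow' (by linarith))
    refine (setLIntegral_mono' measurableSet_Ioc fun s hs => ofReal_le_ofReal ?_).trans_lt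
      hint.setLIntegral_lt_top
    exact mul_le_of_le_one_right (Real.rpow_nonneg hs.1.le _)
      (Real.rpow_le_one_of_one_le_of_nonpos (by linarith [hs.1]) (by linarith))
  · have hint : IntegrableOn (fun s : ℝ => s ^ (δ - 1 - σ)) (Ioi 1) :=
      integrableOn_Ioi_rpow_of_lt (by linarith) zero_lt_one
    refine (setLIntegral_mono' measurableSet_Ioi fun s (hs : 1 < s) => ofReal_le_ofReal ?_).trans_lt
      hint.setLIntegral_lt_top
    rw [sub_eq_add_neg (δ - 1), Real.rpow_add (by linarith)]
    exact mul_le_mul_of_nonneg_left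
      (Real.rpow_le_rpow_of_nonpos (by linarith) (by linarith) (by linarith))
      (Real.rpow_nonneg (by linarith) _)

lemma lintegral_exp_mul_rpow_mul_eq_tsum (a : ℝ) {w : ℝ → ℝ≥0∞}
    (hw : AEMeasurable w (volume.restrict (Ioi 0))) :
    ∫⁻ x in Ioi 0, ENNReal.ofReal (Real.exp x * x ^ a) * w x
      = ∑' m : ℕ, (m ! : ℝ≥0∞)⁻¹ * ∫⁻ x in Ioi 0, ENNReal.ofReal (x ^ ((m : ℝ) + a)) * w x := by
  have hseries : ∀ x ∈ Ioi (0 : ℝ), ENNReal.ofReal (Real.exp x * x ^ a) * w x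
      = ∑' m : ℕ, (m ! : ℝ≥0∞)⁻¹ * (ENNReal.ofReal (x ^ ((m : ℝ) + a)) * w x) := by
    intro x (hx : 0 < x)
    have hterm : ∀ m : ℕ, x ^ m / m ! * x ^ a = (m ! : ℝ)⁻¹ * x ^ ((m : ℝ) + a) := fun m => by
      rw [Real.rpow_add hx, Real.rpow_natCast]; ring
    rw [Real.exp_eq_exp_ℝ, NormedSpace.exp_eq_tsum_div, ← tsum_mul_right,
      ENNReal.ofReal_tsum_of_nonneg (fun m => by positivity)
        ((Real.summable_pow_div_factorial x).mul_right _), ← ENNReal.tsum_mul_right]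
    refine tsum_congr fun m => ?_
    rw [hterm, ofReal_mul (by positivity), ofReal_inv_of_pos (by positivity), ofReal_natCast,
      mul_assoc]
  rw [setLIntegral_congr_fun measurableSet_Ioi hseries, lintegral_tsum fun m => by fun_prop]
  exact tsum_congr fun m =>
    lintegral_const_mul' _ _ (ENNReal.inv_ne_top.2 (by exact_mod_cast m.factorial_ne_zero))

lemma lintegral_exp_mul_rpow_mul_le {a : ℝ} {C : ℝ≥0∞} {v u : ℝ → ℝ≥0∞}
    (hv : AEMeasurable v (volume.restrict (Ioi 0))) (hu : AEMeasurable u (volume.restrict (Ioi 0)))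
    (h : ∀ m : ℕ, ∫⁻ x in Ioi 0, ENNReal.ofReal (x ^ ((m : ℝ) + a)) * v x
      ≤ C * ∫⁻ x in Ioi 0, ENNReal.ofReal (x ^ ((m : ℝ) + a)) * u x) :
    ∫⁻ x in Ioi 0, ENNReal.ofReal (Real.exp x * x ^ a) * v x
      ≤ C * ∫⁻ x in Ioi 0, ENNReal.ofReal (Real.exp x * x ^ a) * u x := by
  rw [lintegral_exp_mul_rpow_mul_eq_tsum a hv, lintegral_exp_mul_rpow_mul_eq_tsum a hu,
    ← ENNReal.tsum_mul_left]
  refine ENNReal.tsum_le_tsum fun m => ?_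
  rw [mul_left_comm]
  gcongr
  exact h m

/-- The fractional-integral correction `u₀ ↦ v₀` is bounded on the weighted spaces
`L²(x^{m+2/γ} dx)` uniformly in `m`, hence also on `L²(e^x x^{2/γ} dx)`. -/
theorem fractional_correction_weighted_bound (γ : ℝ) (hγ : 0 < γ)
    (hnotint : ∀ m : ℤ, 2/γ ≠ (m:ℝ))
    (k : ℤ) (hk : k = ⌊2/γ⌋) (δ : ℝ) (hδ : δ = 2/γ - (k:ℝ)) :
    ∃ C : ℝ, 0 < C ∧
      ∀ u₀ : ℝ → ℝ≥0∞, Measurable u₀ →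
        ∀ v₀ : ℝ → ℝ≥0∞,
          (∀ x : ℝ, v₀ x = ENNReal.ofReal (1 / (x ^ δ * Real.Gamma δ)) *
              ∫⁻ y in Ioi x, ENNReal.ofReal ((1 - x/y) ^ (δ - 1) * y ^ (δ - 1)) * u₀ y) →
          (∀ m : ℕ,
            ∫⁻ x in Ioi (0:ℝ), ENNReal.ofReal (x ^ ((m:ℝ) + 2/γ)) * (v₀ x) ^ 2 ≤
              ENNReal.ofReal C *
                ∫⁻ x in Ioi (0:ℝ), ENNReal.ofReal (x ^ ((m:ℝ) + 2/γ)) * (u₀ x) ^ 2) ∧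
          ∫⁻ x in Ioi (0:ℝ), ENNReal.ofReal (Real.exp x * x ^ (2/γ)) * (v₀ x) ^ 2 ≤
            ENNReal.ofReal C *
              ∫⁻ x in Ioi (0:ℝ), ENNReal.ofReal (Real.exp x * x ^ (2/γ)) * (u₀ x) ^ 2 := by
  have hδ_fract : δ = Int.fract (2 / γ) := by rw [hδ, hk, Int.fract]
  have hδ_pos : 0 < δ := hδ_fract ▸ Int.fract_pos.2 (hnotint _)
  have hδ_lt : δ < (2 / γ + 1) / 2 := hδ_fract ▸ fract_lt_add_one_div_two (by positivity)
  set K := kernelMoment δ ((2 / γ + 1) / 2)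
  set c := ENNReal.ofReal (Real.Gamma δ)⁻¹
  have hcK_top : (c * K) ^ 2 ≠ ∞ :=
    pow_ne_top (mul_ne_top ofReal_ne_top (kernelMoment_lt_top hδ_pos hδ_lt).ne)
  refine ⟨((c * K) ^ 2).toReal + 1, by positivity, fun u hu v hv => ?_⟩
  have hpow : ∀ m : ℕ,
      ∫⁻ x in Ioi 0, ENNReal.ofReal (x ^ ((m : ℝ) + 2 / γ)) * fracCorrection δ u x ^ 2
        ≤ K ^ 2 * ∫⁻ x in Ioi 0, ENNReal.ofReal (x ^ ((m : ℝ) + 2 / γ)) * u x ^ 2 := fun m =>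
    (lintegral_rpow_mul_fracCorrection_sq_le δ _ hu).trans <| by
      gcongr
      exact kernelMoment_antitone δ (by linarith [m.cast_nonneg (α := ℝ)])
  have htransfer : ∀ W : ℝ → ℝ≥0∞,
      ∫⁻ x in Ioi 0, W x * fracCorrection δ u x ^ 2 ≤ K ^ 2 * ∫⁻ x in Ioi 0, W x * u x ^ 2 →
      ∫⁻ x in Ioi 0, W x * v x ^ 2
        ≤ ENNReal.ofReal (((c * K) ^ 2).toReal + 1) * ∫⁻ x in Ioi 0, W x * u x ^ 2 := by
    intro W hW
    calc ∫⁻ x in Ioi 0, W x * v x ^ 2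
        = c ^ 2 * ∫⁻ x in Ioi 0, W x * fracCorrection δ u x ^ 2 := by
          rw [← lintegral_const_mul' _ _ (pow_ne_top ofReal_ne_top)]
          refine setLIntegral_congr_fun measurableSet_Ioi fun x hx => ?_
          rw [hv x, ofReal_mul_lintegral_Ioi_eq_fracCorrection hx u]
          ring
      _ ≤ (c * K) ^ 2 * ∫⁻ x in Ioi 0, W x * u x ^ 2 := by
          rw [mul_pow, mul_assoc]
          gcongr
      _ ≤ _ := by
          gcongr
          exact (le_ofReal_iff_toReal_le hcK_top (by positivity)).2 (by linarith)
  exact ⟨fun m => htransfer _ (hpow m), htransfer _ (lintegral_exp_mul_rpow_mul_le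
    ((measurable_fracCorrection δ hu).pow_const 2).aemeasurable (hu.pow_const 2).aemeasurable hpow)⟩
end

section
/- Let N ≥ 1 and let a₁,…,a_N, b₁,…,b_N be real numbers, all strictly greater than −1, with S = ∑_{i=1}^N (a_i − b_i) ≤ 0. Then there exists C > 0 such that for all real M ≥ 0 and all λ ∈ ℝ: |∏_{i=1}^N Γ(a_i + M + 1 + iλ) / Γ(b_i + M + 1 + iλ)| ≤ C (1 + λ²)^{S/2}, with C independent of M and λ. -/
/-!
For `Re z ≥ u > 0` and `δ ≥ 0` one has `log ‖Γ(z + δ)‖ - log ‖Γ z‖ = δ log ‖z‖ + O(1)` uniformly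
in `z`. This comes from Gauss's product `Γ z = lim n^z n! / ∏_{j ≤ n} (z + j)`: after telescoping
`δ log ‖z‖`, the error is a sum of the second differences
`log ‖w + δ‖ - log ‖w‖ - δ (log ‖w + 1‖ - log ‖w‖) = O(‖w‖⁻²)` at `w = z + j`, and
`∑ ‖z + j‖⁻² ≤ ∑ (u + j)⁻²` is bounded independently of `z`. Summing over the factors gives
`log ‖∏‖ ≤ S log ‖M + 1 + iλ‖ + O(1)`, and `S ≤ 0` with `‖M + 1 + iλ‖² ≥ 1 + λ²` concludes.
-/

open Finset Filter Topology Real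

lemma abs_log_one_add_sub_le_sq {y : ℝ} (hy : 0 ≤ y) : |log (1 + y) - y| ≤ y ^ 2 := by
  have hpos : 0 < 1 + y := by linarith
  have upper : log (1 + y) ≤ y := by linarith [log_le_sub_one_of_pos hpos]
  have lower : y - y ^ 2 ≤ log (1 + y) := by
    have h : y - y ^ 2 ≤ 1 - (1 + y)⁻¹ := by
      rw [le_sub_comm, ← one_div, div_le_iff₀ hpos]; nlinarith
    linarith [one_sub_inv_le_log_of_pos hpos]
  rw [abs_le]; constructor <;> nlinarith

lemma abs_log_one_add_sub_mul_log_one_add_le {y y' δ : ℝ} (hy : 0 ≤ y) (hy' : 0 ≤ y')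
    (hδ : 0 ≤ δ) :
    |log (1 + y) - δ * log (1 + y')| ≤ y ^ 2 + |y - δ * y'| + δ * y' ^ 2 := by
  have h' : |y' - log (1 + y')| ≤ y' ^ 2 := abs_sub_comm y' _ ▸ abs_log_one_add_sub_le_sq hy'
  calc |log (1 + y) - δ * log (1 + y')|
      = |(log (1 + y) - y) + (y - δ * y') + δ * (y' - log (1 + y'))| := by ring_nf
    _ ≤ |log (1 + y) - y| + |y - δ * y'| + |δ * (y' - log (1 + y'))| := abs_add_three _ _ _
    _ ≤ y ^ 2 + |y - δ * y'| + δ * y' ^ 2 := by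
      rw [abs_mul, abs_of_nonneg hδ]
      gcongr
      exact abs_log_one_add_sub_le_sq hy

lemma sq_div_le_of_le_mul {c A x P : ℝ} (hc : 0 ≤ c) (hcx : c ≤ A * x) (hxP : x ^ 2 ≤ P)
    (hP : 0 < P) : (c / P) ^ 2 ≤ A ^ 2 / P := by
  rw [div_pow, div_le_div_iff₀ (by positivity) hP]
  calc c ^ 2 * P ≤ (A * x) ^ 2 * P := by gcongr
    _ = A ^ 2 * x ^ 2 * P := by ring
    _ ≤ A ^ 2 * P * P := by gcongr
    _ = A ^ 2 * P ^ 2 := by ring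

lemma Complex.sq_norm_add_ofReal (w : ℂ) (δ : ℝ) :
    ‖w + δ‖ ^ 2 = ‖w‖ ^ 2 + 2 * δ * w.re + δ ^ 2 := by
  simp only [Complex.sq_norm, Complex.normSq_apply, Complex.add_re, Complex.add_im,
    Complex.ofReal_re, Complex.ofReal_im]
  ring

lemma Complex.re_sq_le_sq_norm (z : ℂ) : z.re ^ 2 ≤ ‖z‖ ^ 2 := by
  rw [sq, Complex.sq_norm]; exact Complex.re_sq_le_normSq z

lemma log_norm_add_ofReal_eq {w : ℂ} (hw : w ≠ 0) {c : ℝ} (hc : 0 ≤ 2 * c * w.re + c ^ 2) :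
    log ‖w + c‖ = log ‖w‖ + log (1 + (2 * c * w.re + c ^ 2) / ‖w‖ ^ 2) / 2 := by
  have hP : 0 < ‖w‖ ^ 2 := by positivity
  have h : ‖w + c‖ ^ 2 = ‖w‖ ^ 2 * (1 + (2 * c * w.re + c ^ 2) / ‖w‖ ^ 2) := by
    rw [Complex.sq_norm_add_ofReal]; field_simp; ring
  have h := congrArg log h
  rw [log_mul hP.ne' (by positivity), log_pow, log_pow] at h
  push_cast at h
  linarith

lemma exists_abs_log_norm_add_sub_le {u δ : ℝ} (hu : 0 < u) (hδ : 0 ≤ δ) :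
    ∃ K, 0 ≤ K ∧ ∀ w : ℂ, u ≤ w.re →
      |(log ‖w + δ‖ - log ‖w‖) - δ * (log ‖w + 1‖ - log ‖w‖)| ≤ K / ‖w‖ ^ 2 := by
  refine ⟨((2 * δ + δ ^ 2 / u) ^ 2 + δ * |δ - 1| + δ * (2 + 1 / u) ^ 2) / 2, by positivity,
    fun w hw => ?_⟩
  set x := w.re
  set P := ‖w‖ ^ 2
  have hx : 0 < x := hu.trans_le hw
  have hxP : x ^ 2 ≤ P := Complex.re_sq_le_sq_norm w
  have hP : 0 < P := (pow_pos hx 2).trans_le hxP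
  set y := (2 * δ * x + δ ^ 2) / P
  set y' := (2 * x + 1) / P
  have hw0 : w ≠ 0 := Complex.ne_zero_of_re_pos hx
  have hyδ : log ‖w + δ‖ = log ‖w‖ + log (1 + y) / 2 := log_norm_add_ofReal_eq hw0 (by positivity)
  have hy1 : log ‖w + 1‖ = log ‖w‖ + log (1 + y') / 2 := by
    simpa using log_norm_add_ofReal_eq hw0 (c := 1) (by positivity)
  have hy_sq : y ^ 2 ≤ (2 * δ + δ ^ 2 / u) ^ 2 / P := by
    refine sq_div_le_of_le_mul (by positivity) ?_ hxP hP
    have : δ ^ 2 ≤ δ ^ 2 / u * x := by rw [div_mul_eq_mul_div, le_div_iff₀ hu]; gcongr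
    linarith
  have hy'_sq : y' ^ 2 ≤ (2 + 1 / u) ^ 2 / P := by
    refine sq_div_le_of_le_mul (by positivity) ?_ hxP hP
    have : 1 ≤ 1 / u * x := by rw [div_mul_eq_mul_div, le_div_iff₀ hu]; linarith
    linarith
  -- the first-order parts `2δx / P` cancel
  have hy_sub : |y - δ * y'| = δ * |δ - 1| / P := by
    rw [show y - δ * y' = δ * (δ - 1) / P by simp only [y, y']; field_simp; ring,
      abs_div, abs_mul, abs_of_nonneg hδ, abs_of_pos hP]
  rw [hyδ, hy1]
  calc |log ‖w‖ + log (1 + y) / 2 - log ‖w‖ - δ * (log ‖w‖ + log (1 + y') / 2 - log ‖w‖)|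
      = |log (1 + y) - δ * log (1 + y')| / 2 := by
        rw [← abs_two, ← abs_div]; ring_nf
    _ ≤ (y ^ 2 + |y - δ * y'| + δ * y' ^ 2) / 2 := by
        gcongr; exact abs_log_one_add_sub_mul_log_one_add_le (by positivity) (by positivity) hδ
    _ ≤ ((2 * δ + δ ^ 2 / u) ^ 2 / P + δ * |δ - 1| / P + δ * ((2 + 1 / u) ^ 2 / P)) / 2 := by
        rw [hy_sub]; gcongr
    _ = _ := by ring

lemma summable_inv_add_nat_sq {u : ℝ} (hu : 0 < u) : Summable fun j : ℕ => ((u + j) ^ 2)⁻¹ := by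
  refine ((Real.summable_one_div_nat_add_rpow u 2).mpr one_lt_two).congr fun j => ?_
  rw [abs_of_pos (by positivity), Real.rpow_two, one_div, add_comm]

lemma sum_inv_sq_norm_add_nat_le {u : ℝ} (hu : 0 < u) {z : ℂ} (hz : u ≤ z.re) (n : ℕ) :
    ∑ j ∈ range n, (‖z + j‖ ^ 2)⁻¹ ≤ ∑' j : ℕ, ((u + j) ^ 2)⁻¹ := by
  refine (sum_le_sum fun j _ => ?_).trans ((summable_inv_add_nat_sq hu).sum_le_tsum _
    fun j _ => by positivity)
  gcongr
  calc u + j ≤ (z + j).re := by simp only [Complex.add_re, Complex.natCast_re]; gcongr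
    _ ≤ ‖z + j‖ := Complex.re_le_norm _

lemma log_norm_GammaSeq {s : ℂ} (hs : 0 < s.re) {n : ℕ} (hn : 0 < n) :
    log ‖Complex.GammaSeq s n‖
      = s.re * log n + log n.factorial - ∑ j ∈ range (n + 1), log ‖s + j‖ := by
  have hterm (j : ℕ) : ‖s + j‖ ≠ 0 := norm_ne_zero_iff.mpr <| Complex.ne_zero_of_re_pos <| by
    simp only [Complex.add_re, Complex.natCast_re]; positivity
  have hn' : (0 : ℝ) < n := by positivity
  rw [Complex.GammaSeq, norm_div, norm_mul, Complex.norm_natCast_cpow_of_pos hn, norm_prod,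
    Complex.norm_natCast, log_div (by positivity) (prod_ne_zero_iff.mpr fun j _ => hterm j),
    log_mul (by positivity) (by positivity), log_rpow hn', log_prod fun j _ => hterm j]

lemma abs_log_norm_GammaSeq_add_sub_le {u δ K : ℝ} (hu : 0 < u) (hδ : 0 ≤ δ) (hK0 : 0 ≤ K)
    (hK : ∀ w : ℂ, u ≤ w.re →
      |(log ‖w + δ‖ - log ‖w‖) - δ * (log ‖w + 1‖ - log ‖w‖)| ≤ K / ‖w‖ ^ 2)
    {z : ℂ} (hz : u ≤ z.re) {n : ℕ} (hn : 0 < n) :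
    |log ‖Complex.GammaSeq (z + δ) n‖ - log ‖Complex.GammaSeq z n‖ - δ * log ‖z‖|
      ≤ K * ∑' j : ℕ, ((u + j) ^ 2)⁻¹ + δ * |log ‖z + (n + 1 : ℕ)‖ - log n| := by
  have hz0 : 0 < z.re := hu.trans_le hz
  have hzδ : 0 < (z + δ).re := by simp only [Complex.add_re, Complex.ofReal_re]; positivity
  set f : ℕ → ℝ := fun j => log ‖z + j‖
  set e : ℕ → ℝ := fun j => (log ‖z + j + δ‖ - f j) - δ * (f (j + 1) - f j)
  have he (j : ℕ) : |e j| ≤ K * (‖z + j‖ ^ 2)⁻¹ := by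
    have hj : u ≤ (z + j).re := by
      simp only [Complex.add_re, Complex.natCast_re]; linarith [(Nat.cast_nonneg j : (0 : ℝ) ≤ j)]
    simpa [e, f, add_assoc, div_eq_mul_inv] using hK (z + j) hj
  have htelescope :
      log ‖Complex.GammaSeq (z + δ) n‖ - log ‖Complex.GammaSeq z n‖ - δ * log ‖z‖
        = -∑ j ∈ range (n + 1), e j - δ * (f (n + 1) - log n) := by
    simp only [e, log_norm_GammaSeq hz0 hn, log_norm_GammaSeq hzδ hn, sum_sub_distrib,
      ← mul_sum, sum_range_sub f, add_right_comm z (δ : ℂ)]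
    simp only [f, Complex.add_re, Complex.ofReal_re, CharP.cast_eq_zero, add_zero]
    ring
  rw [htelescope]
  calc |-∑ j ∈ range (n + 1), e j - δ * (f (n + 1) - log n)|
      ≤ ∑ j ∈ range (n + 1), |e j| + δ * |f (n + 1) - log n| := by
        refine (abs_sub _ _).trans ?_
        rw [abs_neg, abs_mul, abs_of_nonneg hδ]
        gcongr
        exact abs_sum_le_sum_abs _ _
    _ ≤ K * ∑ j ∈ range (n + 1), (‖z + j‖ ^ 2)⁻¹ + δ * |f (n + 1) - log n| := by
        rw [mul_sum]; gcongr with j; exact he j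
    _ ≤ _ := by gcongr; exact sum_inv_sq_norm_add_nat_le hu hz _

lemma tendsto_log_norm_add_nat_succ_sub_log {z : ℂ} (hz : 0 ≤ z.re) :
    Tendsto (fun n : ℕ => log ‖z + (n + 1 : ℕ)‖ - log n) atTop (𝓝 0) := by
  have h := ((tendsto_natCast_div_add_atTop (z + 1)).norm.log (by simp)).neg
  rw [norm_one, log_one, neg_zero] at h
  refine h.congr' ((eventually_gt_atTop 0).mono fun n hn => ?_)
  have hsum : (n : ℂ) + (z + 1) = z + ((n + 1 : ℕ) : ℂ) := by push_cast; ring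
  have hne : z + ((n + 1 : ℕ) : ℂ) ≠ 0 := Complex.ne_zero_of_re_pos <| by
    simp only [Complex.add_re, Complex.natCast_re]; positivity
  rw [hsum, norm_div, Complex.norm_natCast, log_div (by positivity) (norm_ne_zero_iff.mpr hne)]
  ring

lemma exists_abs_log_norm_Gamma_add_sub_le {u δ : ℝ} (hu : 0 < u) (hδ : 0 ≤ δ) :
    ∃ K, ∀ z : ℂ, u ≤ z.re →
      |log ‖Complex.Gamma (z + δ)‖ - log ‖Complex.Gamma z‖ - δ * log ‖z‖| ≤ K := by
  obtain ⟨K, hK0, hK⟩ := exists_abs_log_norm_add_sub_le hu hδ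
  refine ⟨K * ∑' j : ℕ, ((u + j) ^ 2)⁻¹, fun z hz => ?_⟩
  have hz0 : 0 < z.re := hu.trans_le hz
  have hzδ : 0 < (z + δ).re := by simp only [Complex.add_re, Complex.ofReal_re]; positivity
  have hlim (s : ℂ) (hs : 0 < s.re) := (Complex.GammaSeq_tendsto_Gamma s).norm.log
    (norm_ne_zero_iff.mpr (Complex.Gamma_ne_zero_of_re_pos hs))
  refine le_of_tendsto_of_tendsto (((hlim _ hzδ).sub (hlim _ hz0)).sub_const _).abs ?_
    ((eventually_gt_atTop 0).mono fun n hn => abs_log_norm_GammaSeq_add_sub_le hu hδ hK0 hK hz hn)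
  simpa using ((tendsto_log_norm_add_nat_succ_sub_log hz0.le).abs.const_mul δ).const_add _

lemma exists_abs_log_norm_ofReal_add_sub_le {c : ℝ} (hc : -1 < c) :
    ∃ K, ∀ w : ℂ, 1 ≤ w.re → |log ‖c + w‖ - log ‖w‖| ≤ K := by
  set m := min 1 (1 + c)
  have hm : 0 < m := lt_min one_pos (by linarith)
  refine ⟨log (1 + |c|) - log m, fun w hw => ?_⟩
  have hw0 : 0 < ‖w‖ := one_pos.trans_le (hw.trans (Complex.re_le_norm w))
  have upper : ‖c + w‖ ≤ (1 + |c|) * ‖w‖ := by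
    have : |c| ≤ |c| * ‖w‖ :=
      le_mul_of_one_le_right (abs_nonneg c) (hw.trans (Complex.re_le_norm w))
    calc ‖c + w‖ ≤ |c| + ‖w‖ := by simpa using norm_add_le (c : ℂ) w
      _ ≤ (1 + |c|) * ‖w‖ := by linarith
  have lower : m * ‖w‖ ≤ ‖c + w‖ := by
    have hre : m * w.re ≤ c + w.re := by
      rcases le_total 0 c with h | h
      · nlinarith [min_le_left 1 (1 + c)]
      · nlinarith [min_le_right 1 (1 + c)]
    have him : m ^ 2 * w.im ^ 2 ≤ w.im ^ 2 :=
      mul_le_of_le_one_left (sq_nonneg _) (pow_le_one₀ hm.le (min_le_left _ _))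
    refine (pow_le_pow_iff_left₀ (by positivity) (norm_nonneg _) two_ne_zero).mp ?_
    have hmx : 0 ≤ m * w.re := by nlinarith
    rw [mul_pow, Complex.sq_norm, Complex.sq_norm, Complex.normSq_apply, Complex.normSq_apply]
    simp only [Complex.add_re, Complex.add_im, Complex.ofReal_re, Complex.ofReal_im, zero_add]
    nlinarith [mul_le_mul hre hre hmx (hmx.trans hre)]
  have hcw : 0 < ‖c + w‖ := (mul_pos hm hw0).trans_le lower
  have hlog_upper := log_le_log hcw upper
  have hlog_lower := log_le_log (mul_pos hm hw0) lower
  rw [log_mul (by positivity) hw0.ne'] at hlog_upper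
  rw [log_mul hm.ne' hw0.ne'] at hlog_lower
  have : 0 ≤ log (1 + |c|) := log_nonneg (by linarith [abs_nonneg c])
  have : log m ≤ 0 := log_nonpos hm.le (min_le_left _ _)
  rw [abs_le]; constructor <;> linarith

lemma exists_abs_log_norm_Gamma_ofReal_add_sub_le {α β : ℝ} (hα : -1 < α) (hβ : -1 < β) :
    ∃ K, ∀ w : ℂ, 1 ≤ w.re →
      |log ‖Complex.Gamma (α + w)‖ - log ‖Complex.Gamma (β + w)‖ - (α - β) * log ‖w‖| ≤ K := by
  wlog hαβ : α ≤ β generalizing α β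
  · obtain ⟨K, hK⟩ := this hβ hα (le_of_not_ge hαβ)
    refine ⟨K, fun w hw => ?_⟩
    rw [← abs_neg]
    convert hK w hw using 2
    ring
  obtain ⟨K₁, hK₁⟩ :=
    exists_abs_log_norm_Gamma_add_sub_le (u := α + 1) (δ := β - α) (by linarith) (by linarith)
  obtain ⟨K₂, hK₂⟩ := exists_abs_log_norm_ofReal_add_sub_le hα
  refine ⟨K₁ + (β - α) * K₂, fun w hw => ?_⟩
  have h₁ := hK₁ (α + w) (by simp only [Complex.add_re, Complex.ofReal_re]; linarith)
  rw [show (α : ℂ) + w + ((β - α : ℝ) : ℂ) = β + w by push_cast; ring] at h₁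
  calc |log ‖Complex.Gamma (α + w)‖ - log ‖Complex.Gamma (β + w)‖ - (α - β) * log ‖w‖|
      = |-(log ‖Complex.Gamma (β + w)‖ - log ‖Complex.Gamma (α + w)‖ - (β - α) * log ‖α + w‖)
          - (β - α) * (log ‖α + w‖ - log ‖w‖)| := by ring_nf
    _ ≤ K₁ + (β - α) * K₂ := by
      refine (abs_sub _ _).trans ?_
      rw [abs_neg, abs_mul, abs_of_nonneg (sub_nonneg.mpr hαβ)]
      gcongr
      exact hK₂ w hw

lemma exists_abs_sum_log_norm_Gamma_ofReal_add_sub_le {ι : Type*} (s : Finset ι) {a b : ι → ℝ}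
    (ha : ∀ i ∈ s, -1 < a i) (hb : ∀ i ∈ s, -1 < b i) :
    ∃ K, ∀ w : ℂ, 1 ≤ w.re →
      |∑ i ∈ s, (log ‖Complex.Gamma (a i + w)‖ - log ‖Complex.Gamma (b i + w)‖)
        - (∑ i ∈ s, (a i - b i)) * log ‖w‖| ≤ K := by
  classical
  induction s using Finset.induction_on with
  | empty => exact ⟨0, by simp⟩
  | insert i s hi ih =>
    obtain ⟨K₁, h₁⟩ := exists_abs_log_norm_Gamma_ofReal_add_sub_le (ha i (mem_insert_self i s))
      (hb i (mem_insert_self i s))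
    obtain ⟨K₂, h₂⟩ := ih (fun j hj => ha j (mem_insert_of_mem hj))
      (fun j hj => hb j (mem_insert_of_mem hj))
    refine ⟨K₁ + K₂, fun w hw => ?_⟩
    rw [sum_insert hi, sum_insert hi, add_mul]
    calc _ = |(log ‖Complex.Gamma (a i + w)‖ - log ‖Complex.Gamma (b i + w)‖
            - (a i - b i) * log ‖w‖)
          + (∑ j ∈ s, (log ‖Complex.Gamma (a j + w)‖ - log ‖Complex.Gamma (b j + w)‖)
            - (∑ j ∈ s, (a j - b j)) * log ‖w‖)| := by ring_nf
      _ ≤ K₁ + K₂ := (abs_add_le _ _).trans (add_le_add (h₁ w hw) (h₂ w hw))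

lemma norm_prod_div_eq_exp_sum_log {ι 𝕜 : Type*} [NormedField 𝕜] (s : Finset ι) {f g : ι → 𝕜}
    (hf : ∀ i ∈ s, f i ≠ 0) (hg : ∀ i ∈ s, g i ≠ 0) :
    ‖∏ i ∈ s, f i / g i‖ = exp (∑ i ∈ s, (log ‖f i‖ - log ‖g i‖)) := by
  rw [norm_prod, exp_sum]
  refine prod_congr rfl fun i hi => ?_
  rw [exp_sub, exp_log (norm_pos_iff.mpr (hf i hi)), exp_log (norm_pos_iff.mpr (hg i hi)),
    norm_div]

theorem gamma_product_shift_bound_nonpos_general (N : ℕ) (a b : ℕ → ℝ)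
    (ha : ∀ i ∈ Icc 1 N, -1 < a i) (hb : ∀ i ∈ Icc 1 N, -1 < b i)
    (hS : ∑ i ∈ Icc 1 N, (a i - b i) ≤ 0) :
    ∃ C > 0, ∀ M : ℝ, 0 ≤ M → ∀ lam : ℝ,
      ‖∏ i ∈ Icc 1 N,
          Complex.Gamma ((a i : ℂ) + (M:ℂ) + 1 + Complex.I * lam) /
            Complex.Gamma ((b i : ℂ) + (M:ℂ) + 1 + Complex.I * lam)‖ ≤
        C * (1 + lam ^ 2) ^ ((∑ i ∈ Icc 1 N, (a i - b i)) / 2) := by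
  obtain ⟨K, hK⟩ := exists_abs_sum_log_norm_Gamma_ofReal_add_sub_le (Icc 1 N) ha hb
  refine ⟨exp K, exp_pos K, fun M hM lam => ?_⟩
  set S := ∑ i ∈ Icc 1 N, (a i - b i)
  set w : ℂ := M + 1 + Complex.I * lam
  have hw_re : w.re = M + 1 := by simp [w]
  have hw_im : w.im = lam := by simp [w]
  have hw : 1 ≤ w.re := by rw [hw_re]; linarith
  have hGamma (c : ℝ) (hc : -1 < c) : Complex.Gamma (c + w) ≠ 0 :=
    Complex.Gamma_ne_zero_of_re_pos <| by
      simp only [Complex.add_re, Complex.ofReal_re]; linarith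
  have hlog_w : S * log ‖w‖ ≤ S / 2 * log (1 + lam ^ 2) := by
    have hnorm : 1 + lam ^ 2 ≤ ‖w‖ ^ 2 := by
      rw [Complex.sq_norm, Complex.normSq_apply, hw_re, hw_im]; nlinarith
    rw [show S * log ‖w‖ = S / 2 * log (‖w‖ ^ 2) by rw [log_pow]; push_cast; ring]
    exact mul_le_mul_of_nonpos_left (log_le_log (by positivity) hnorm) (by linarith)
  simp_rw [show ∀ c : ℝ, (c : ℂ) + M + 1 + Complex.I * lam = c + w from fun c => by ring]
  rw [norm_prod_div_eq_exp_sum_log _ (fun i hi => hGamma _ (ha i hi))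
    fun i hi => hGamma _ (hb i hi)]
  calc exp (∑ i ∈ Icc 1 N, (log ‖Complex.Gamma (a i + w)‖ - log ‖Complex.Gamma (b i + w)‖))
      ≤ exp (K + S / 2 * log (1 + lam ^ 2)) := by
        gcongr
        linarith [(abs_le.mp (hK w hw)).2]
    _ = exp K * (1 + lam ^ 2) ^ (S / 2) := by
        rw [exp_add, rpow_def_of_pos (by positivity), mul_comm (S / 2)]

/-- Uniform-in-shift Gamma product estimate, case `S = ∑(a_i − b_i) ≤ 0`:
`|∏ Γ(a_i+M+1+iλ)/Γ(b_i+M+1+iλ)| ≤ C (1+λ²)^{S/2}` with `C` independent of `M ≥ 0` and `λ`. -/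
theorem gamma_product_shift_bound_nonpos (N : ℕ) (hN : 1 ≤ N) (a b : ℕ → ℝ)
    (ha : ∀ i ∈ Icc 1 N, -1 < a i) (hb : ∀ i ∈ Icc 1 N, -1 < b i)
    (hS : ∑ i ∈ Icc 1 N, (a i - b i) ≤ 0) :
    ∃ C > 0, ∀ M : ℝ, 0 ≤ M → ∀ lam : ℝ,
      ‖∏ i ∈ Icc 1 N,
          Complex.Gamma ((a i : ℂ) + (M:ℂ) + 1 + Complex.I * lam) /
            Complex.Gamma ((b i : ℂ) + (M:ℂ) + 1 + Complex.I * lam)‖ ≤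
        C * (1 + lam ^ 2) ^ ((∑ i ∈ Icc 1 N, (a i - b i)) / 2) :=
  gamma_product_shift_bound_nonpos_general N a b ha hb hS
end

section
/- Let N ≥ 1 and let a₁,…,a_N, b₁,…,b_N be real numbers, all strictly greater than −1, with S = ∑_{i=1}^N (a_i − b_i) > 0. Then there exists C > 0 such that for all real M ≥ 0 and all λ ∈ ℝ: |∏_{i=1}^N Γ(a_i + M + 1 + iλ) / Γ(b_i + M + 1 + iλ)| ≤ C (1 + M)^{S} (1 + λ²)^{S/2}. -/
/-!
Write `z = x + y i` with `x = Re z ≥ 1`. By Euler's limit formula, `|Γ(z + t) / Γ(z)|` equals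
`Γ(x + t) / Γ(x)` times `exp ∑ₙ (ψ(x + n) - ψ(x + t + n))`, where `ψ(u) = log (|u + y i| / u)` is
convex on `(0, ∞)`. For `0 ≤ t ≤ 1`, comparing slopes of `ψ` bounds the sum by `t (ψ(x) + log 4)`,
and log-convexity of `Γ` gives `Γ(x + t) / Γ(x) ≤ x ^ t`; hence `|Γ(z + t) / Γ(z)| ≤ 4 |z| ^ t`.
The same bound at `z + t` for the shift `1 - t`, with `Γ(z + 1) = z Γ(z)`, is a lower bound
`|z| ^ t ≤ 8 |Γ(z + t) / Γ(z)|`. The recursion `Γ(w + 1) = w Γ(w)` and `|z + γ| ≍ |z|` then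
propagate `|Γ(z + γ) / Γ(z)| ≍ |z| ^ γ` to every `γ > -1`, and the theorem is the product of these
estimates over the pairs `(aᵢ, bᵢ)`, using `|M + 1 + λ i| ≤ (1 + M) (1 + λ²) ^ (1 / 2)` and `S ≥ 0`.
-/

open Finset Filter Asymptotics Complex

theorem ConvexOn.mul_sub_le_sub {φ : ℝ → ℝ} (hφ : ConvexOn ℝ (Set.Ioi 0) φ) {p t : ℝ}
    (hp : 0 < p) (ht : 0 ≤ t) : t * (φ (p + t) - φ (p + t + 1)) ≤ φ p - φ (p + t) := by
  rcases ht.eq_or_lt with rfl | ht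
  · simp
  have h := hφ.slope_mono_adjacent (x := p) (y := p + t) (z := p + t + 1) hp
    (by simp only [Set.mem_Ioi]; linarith) (by linarith) (by linarith)
  rw [add_sub_cancel_left, add_sub_cancel_left, div_one, div_le_iff₀ ht] at h
  linarith

theorem ConvexOn.sub_le_div_mul_sub {φ : ℝ → ℝ} (hφ : ConvexOn ℝ (Set.Ioi 0) φ) {p q t : ℝ}
    (hp : 0 < p) (hpq : p < q) (ht : 0 ≤ t) : φ q - φ (q + t) ≤ t / (q - p) * (φ p - φ q) := by
  rcases ht.eq_or_lt with rfl | ht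
  · simp
  have h := hφ.slope_mono_adjacent (x := p) (y := q) (z := q + t) hp
    (by simp only [Set.mem_Ioi]; linarith) hpq (by linarith)
  rw [add_sub_cancel_left, le_div_iff₀ ht, div_mul_eq_mul_div, div_le_iff₀ (sub_pos.2 hpq)] at h
  rw [div_mul_eq_mul_div, le_div_iff₀ (sub_pos.2 hpq)]
  linarith

theorem ConvexOn.mul_sub_le_sum_sub {φ : ℝ → ℝ} (hφ : ConvexOn ℝ (Set.Ioi 0) φ) {x t : ℝ}
    (hx : 0 < x) (ht : 0 ≤ t) (n : ℕ) :
    t * (φ (x + t) - φ (x + t + n)) ≤ ∑ j ∈ range n, (φ (x + j) - φ (x + t + j)) := by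
  have htel := sum_range_sub' (fun j : ℕ => φ (x + t + j)) n
  rw [Nat.cast_zero, add_zero] at htel
  rw [← htel, mul_sum]
  refine sum_le_sum fun j _ => ?_
  rw [Nat.cast_succ, ← add_assoc, add_right_comm x t]
  exact hφ.mul_sub_le_sub (by positivity) ht

theorem ConvexOn.sum_sub_le_mul_sub {φ : ℝ → ℝ} (hφ : ConvexOn ℝ (Set.Ioi 0) φ) {x t : ℝ}
    (hx : 0 < x) (ht : 0 ≤ t) (n : ℕ) :
    ∑ j ∈ range n, (φ (x + 1 + j) - φ (x + 1 + j + t)) ≤ t * (φ x - φ (x + n)) := by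
  have htel := sum_range_sub' (fun j : ℕ => φ (x + j)) n
  rw [Nat.cast_zero, add_zero] at htel
  rw [← htel, mul_sum]
  refine sum_le_sum fun j _ => ?_
  have h := hφ.sub_le_div_mul_sub (p := x + j) (q := x + j + 1) (by positivity) (by linarith) ht
  rw [add_sub_cancel_left, div_one] at h
  rwa [Nat.cast_succ, ← add_assoc, add_right_comm x 1]

theorem norm_add_le_mul_norm {E : Type*} [SeminormedAddGroup E] {w d : E} {ε : ℝ} (hε : 0 < ε)
    (hw : ε ≤ ‖w‖) : ‖w + d‖ ≤ (1 + ‖d‖ / ε) * ‖w‖ :=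
  calc ‖w + d‖ ≤ ‖w‖ + ‖d‖ / ε * ε := by rw [div_mul_cancel₀ _ hε.ne']; exact norm_add_le w d
    _ ≤ (1 + ‖d‖ / ε) * ‖w‖ := by rw [add_mul, one_mul]; gcongr

theorem Real.GammaSeq_nonneg {s : ℝ} (hs : 0 ≤ s) (n : ℕ) : 0 ≤ Real.GammaSeq s n := by
  unfold Real.GammaSeq
  positivity

theorem Real.Gamma_add_le_Gamma_mul_rpow {x t : ℝ} (hx : 0 < x) (ht0 : 0 ≤ t) (ht1 : t ≤ 1) :
    Real.Gamma (x + t) ≤ Real.Gamma x * x ^ t := by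
  have hΓ := Real.Gamma_pos_of_pos hx
  have h := Real.convexOn_log_Gamma.2 (Set.mem_Ioi.2 hx) (Set.mem_Ioi.2 (by linarith : 0 < x + 1))
    (sub_nonneg.2 ht1) ht0 (sub_add_cancel 1 t)
  simp only [smul_eq_mul, Function.comp_apply] at h
  rw [show (1 - t) * x + t * (x + 1) = x + t by ring, Real.Gamma_add_one hx.ne',
    Real.log_mul hx.ne' hΓ.ne'] at h
  rw [← Real.log_le_log_iff (Real.Gamma_pos_of_pos (by linarith)) (by positivity),
    Real.log_mul hΓ.ne' (by positivity), Real.log_rpow hx]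
  linarith

namespace Complex

/-- `log (‖u + y i‖ / u)`. -/
noncomputable def logNormExcess (y u : ℝ) : ℝ := Real.log (u ^ 2 + y ^ 2) / 2 - Real.log u

theorem hasDerivAt_logNormExcess (y : ℝ) {u : ℝ} (hu : 0 < u) :
    HasDerivAt (logNormExcess y) (-(y ^ 2 / (u * (u ^ 2 + y ^ 2)))) u := by
  refine ((((hasDerivAt_pow 2 u).add_const (y ^ 2)).log (by positivity)).div_const 2).sub
    (Real.hasDerivAt_log hu.ne') |>.congr_deriv ?_
  field_simp
  ring

theorem convexOn_logNormExcess (y : ℝ) : ConvexOn ℝ (Set.Ioi 0) (logNormExcess y) := by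
  have hderiv : ∀ u ∈ interior (Set.Ioi (0 : ℝ)),
      HasDerivAt (logNormExcess y) (-(y ^ 2 / (u * (u ^ 2 + y ^ 2)))) u :=
    fun u hu => hasDerivAt_logNormExcess y (interior_subset hu)
  refine MonotoneOn.convexOn_of_deriv (convex_Ioi 0)
    (fun u hu => (hasDerivAt_logNormExcess y hu).continuousAt.continuousWithinAt)
    (fun u hu => (hderiv u hu).differentiableAt.differentiableWithinAt) ?_
  intro u hu v hv huv
  rw [(hderiv u hu).deriv, (hderiv v hv).deriv, neg_le_neg_iff]
  simp only [interior_Ioi, Set.mem_Ioi] at hu hv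
  gcongr

theorem logNormExcess_nonneg (y : ℝ) {u : ℝ} (hu : 0 < u) : 0 ≤ logNormExcess y u := by
  have h : Real.log (u ^ 2) ≤ Real.log (u ^ 2 + y ^ 2) :=
    Real.log_le_log (by positivity) (le_add_of_nonneg_right (sq_nonneg y))
  rw [Real.log_pow, Nat.cast_ofNat] at h
  unfold logNormExcess
  linarith

theorem logNormExcess_sub_le (y : ℝ) {p x : ℝ} (hp : 0 < p) (hpx : p ≤ x) :
    logNormExcess y p - logNormExcess y x ≤ Real.log x - Real.log p := by
  have h : Real.log (p ^ 2 + y ^ 2) ≤ Real.log (x ^ 2 + y ^ 2) :=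
    Real.log_le_log (by positivity) (by gcongr)
  unfold logNormExcess
  linarith

theorem norm_eq_re_mul_exp_logNormExcess {w : ℂ} (hw : 0 < w.re) :
    ‖w‖ = w.re * Real.exp (logNormExcess w.im w.re) := by
  rw [logNormExcess, Real.exp_sub, Real.exp_log hw, mul_div_cancel₀ _ hw.ne',
    ← Real.log_sqrt (by positivity), Real.exp_log (by positivity), norm_eq_sqrt_sq_add_sq]

theorem norm_GammaSeq {z : ℂ} (hz : 0 < z.re) {n : ℕ} (hn : n ≠ 0) :
    ‖GammaSeq z n‖ =
      Real.GammaSeq z.re n * Real.exp (-∑ j ∈ range (n + 1), logNormExcess z.im (z.re + j)) := by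
  have hfactor : ∀ j ∈ range (n + 1),
      ‖z + j‖ = (z.re + j) * Real.exp (logNormExcess z.im (z.re + j)) := fun j _ => by
    simpa using norm_eq_re_mul_exp_logNormExcess (w := z + j)
      (by simp only [add_re, natCast_re]; positivity)
  rw [GammaSeq, Real.GammaSeq, norm_div, norm_mul, norm_prod, prod_congr rfl hfactor,
    prod_mul_distrib, ← Real.exp_sum, norm_natCast_cpow_of_pos (Nat.pos_of_ne_zero hn),
    Complex.norm_natCast, Real.exp_neg]
  ring

theorem norm_GammaSeq_add_div {z : ℂ} {t : ℝ} (hz : 0 < z.re) (ht : 0 ≤ t) {n : ℕ} (hn : n ≠ 0) :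
    ‖GammaSeq (z + t) n / GammaSeq z n‖ =
      Real.GammaSeq (z.re + t) n / Real.GammaSeq z.re n *
        Real.exp (∑ j ∈ range (n + 1),
          (logNormExcess z.im (z.re + j) - logNormExcess z.im (z.re + t + j))) := by
  rw [norm_div, norm_GammaSeq (by simpa using add_pos_of_pos_of_nonneg hz ht) hn,
    norm_GammaSeq hz hn, mul_div_mul_comm, ← Real.exp_sub, sum_sub_distrib]
  simp only [add_re, ofReal_re, add_im, ofReal_im, add_zero]
  ring_nf

theorem norm_Gamma_add_div_Gamma_le_of_sum_le {z : ℂ} {t B : ℝ} (hz : 0 < z.re) (ht : 0 ≤ t)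
    (hB : ∀ n : ℕ, ∑ j ∈ range (n + 1),
      (logNormExcess z.im (z.re + j) - logNormExcess z.im (z.re + t + j)) ≤ B) :
    ‖Gamma (z + t) / Gamma z‖ ≤ Real.Gamma (z.re + t) / Real.Gamma z.re * Real.exp B := by
  refine le_of_tendsto_of_tendsto
    ((GammaSeq_tendsto_Gamma _).div (GammaSeq_tendsto_Gamma z) (Gamma_ne_zero_of_re_pos hz)).norm
    (((Real.GammaSeq_tendsto_Gamma _).div (Real.GammaSeq_tendsto_Gamma _)
      (Real.Gamma_pos_of_pos hz).ne').mul_const _) ?_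
  filter_upwards [eventually_ne_atTop 0] with n hn
  rw [Pi.div_apply, Pi.div_apply, norm_GammaSeq_add_div hz ht hn]
  have hΓt := Real.GammaSeq_nonneg (s := z.re + t) (by positivity) n
  have hΓ := Real.GammaSeq_nonneg hz.le n
  gcongr
  exact hB n

theorem sum_logNormExcess_sub_le (y : ℝ) {x t : ℝ} (hx : 1 ≤ x) (ht : 0 ≤ t) (n : ℕ) :
    ∑ j ∈ range (n + 1), (logNormExcess y (x + j) - logNormExcess y (x + t + j)) ≤
      t * (logNormExcess y x + Real.log 4) := by
  have hψ := convexOn_logNormExcess y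
  -- The `j = 0` term is compared with the slope on `[x - 1/2, x]`; the others telescope.
  have hfirst : logNormExcess y x - logNormExcess y (x + t) ≤ t * Real.log 4 := by
    have hslope := hψ.sub_le_div_mul_sub (p := x - 1 / 2) (q := x) (by linarith) (by linarith)
      ht
    have hgap := logNormExcess_sub_le y (p := x - 1 / 2) (x := x) (by linarith) (by linarith)
    have hlog : Real.log x - Real.log (x - 1 / 2) ≤ Real.log 2 := by
      rw [← Real.log_div (by positivity) (by linarith)]
      exact Real.log_le_log (div_pos (by linarith) (by linarith))
        ((div_le_iff₀ (by linarith)).2 (by linarith))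
    calc logNormExcess y x - logNormExcess y (x + t)
        ≤ t / (x - (x - 1 / 2)) * (logNormExcess y (x - 1 / 2) - logNormExcess y x) := hslope
      _ ≤ t / (1 / 2) * Real.log 2 := by rw [sub_sub_cancel]; gcongr; linarith
      _ = t * Real.log 4 := by
        rw [show (4 : ℝ) = 2 ^ 2 by norm_num, Real.log_pow]; push_cast; ring
  have htail := hψ.sum_sub_le_mul_sub (x := x) (by linarith) ht n
  have hend := logNormExcess_nonneg y (u := x + n) (by positivity)
  have hshift : ∑ j ∈ range n,
        (logNormExcess y (x + (j + 1 : ℕ)) - logNormExcess y (x + t + (j + 1 : ℕ))) =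
      ∑ j ∈ range n, (logNormExcess y (x + 1 + j) - logNormExcess y (x + 1 + j + t)) :=
    sum_congr rfl fun j _ => by push_cast; ring_nf
  rw [sum_range_succ', hshift, Nat.cast_zero, add_zero, add_zero]
  linarith [mul_nonneg ht hend]

theorem norm_Gamma_add_div_Gamma_le {z : ℂ} {t : ℝ} (hz : 1 ≤ z.re) (ht0 : 0 ≤ t) (ht1 : t ≤ 1) :
    ‖Gamma (z + t) / Gamma z‖ ≤ 4 * ‖z‖ ^ t := by
  have hx : 0 < z.re := by linarith
  calc ‖Gamma (z + t) / Gamma z‖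
      ≤ Real.Gamma (z.re + t) / Real.Gamma z.re *
          Real.exp (t * (logNormExcess z.im z.re + Real.log 4)) :=
        norm_Gamma_add_div_Gamma_le_of_sum_le hx ht0 (sum_logNormExcess_sub_le z.im hz ht0)
    _ ≤ z.re ^ t * Real.exp (t * (logNormExcess z.im z.re + Real.log 4)) := by
        gcongr
        rw [div_le_iff₀ (Real.Gamma_pos_of_pos hx), mul_comm]
        exact Real.Gamma_add_le_Gamma_mul_rpow hx ht0 ht1
    _ = 4 ^ t * ‖z‖ ^ t := by
        rw [norm_eq_re_mul_exp_logNormExcess hx, mul_comm t, Real.exp_mul, Real.exp_add,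
          Real.exp_log (by norm_num), ← Real.mul_rpow hx.le (by positivity),
          ← Real.mul_rpow (by norm_num) (by positivity)]
        ring_nf
    _ ≤ 4 * ‖z‖ ^ t := by
        gcongr
        exact Real.rpow_le_self_of_one_le (by norm_num) ht1

theorem rpow_le_mul_norm_Gamma_add_div_Gamma {z : ℂ} {t : ℝ} (hz : 1 ≤ z.re) (ht0 : 0 ≤ t)
    (ht1 : t ≤ 1) : ‖z‖ ^ t ≤ 8 * ‖Gamma (z + t) / Gamma z‖ := by
  have hz0 : 1 ≤ ‖z‖ := hz.trans (re_le_norm z)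
  have hΓz : Gamma z ≠ 0 := Gamma_ne_zero_of_re_pos (by linarith)
  have hΓzt : Gamma (z + t) ≠ 0 :=
    Gamma_ne_zero_of_re_pos (by simp only [add_re, ofReal_re]; linarith)
  have hprod : Gamma (z + t) / Gamma z * (Gamma (z + t + ↑(1 - t)) / Gamma (z + t)) = z := by
    rw [mul_comm, div_mul_div_cancel₀ hΓzt]
    push_cast
    rw [add_add_sub_cancel, Gamma_add_one z (by rintro rfl; norm_num at hz),
      mul_div_cancel_right₀ _ hΓz]
  have hback := norm_Gamma_add_div_Gamma_le (z := z + t) (t := 1 - t)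
    (by simp only [add_re, ofReal_re]; linarith)
    (by linarith) (by linarith)
  have hzt : ‖z + t‖ ≤ 2 * ‖z‖ := by
    calc ‖z + t‖ ≤ ‖z‖ + ‖(t : ℂ)‖ := norm_add_le _ _
      _ ≤ 2 * ‖z‖ := by rw [norm_real, Real.norm_of_nonneg ht0]; linarith
  set R := ‖Gamma (z + t) / Gamma z‖
  have key : ‖z‖ ^ t * ‖z‖ ^ (1 - t) ≤ 8 * R * ‖z‖ ^ (1 - t) :=
    calc ‖z‖ ^ t * ‖z‖ ^ (1 - t) = ‖z‖ := by
          rw [← Real.rpow_add (by linarith), add_sub_cancel, Real.rpow_one]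
      _ = R * ‖Gamma (z + t + ↑(1 - t)) / Gamma (z + t)‖ := by rw [← norm_mul, hprod]
      _ ≤ R * (4 * (2 * ‖z‖) ^ (1 - t)) := by
          gcongr
          exact hback.trans (by gcongr)
      _ = 4 * 2 ^ (1 - t) * R * ‖z‖ ^ (1 - t) := by
          rw [Real.mul_rpow (by norm_num) (by positivity)]; ring
      _ ≤ 8 * R * ‖z‖ ^ (1 - t) := by
          gcongr
          linarith [Real.rpow_le_self_of_one_le (x := 2) (by norm_num) (by linarith : 1 - t ≤ 1)]
  exact le_of_mul_le_mul_right key (by positivity)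

theorem isTheta_add_const {c : ℝ} (hc : -1 < c) :
    (fun z : ℂ => z + c) =Θ[𝓟 {z : ℂ | 1 ≤ z.re}] fun z => z := by
  refine ⟨.of_bound (1 + ‖(c : ℂ)‖) ?_, .of_bound (1 + ‖(-c : ℂ)‖ / (1 + c)) ?_⟩ <;>
    filter_upwards [mem_principal_self _] with z (hz : 1 ≤ z.re)
  · simpa using norm_add_le_mul_norm (d := (c : ℂ)) one_pos (hz.trans (re_le_norm z))
  · have hzc : 1 + c ≤ ‖z + c‖ :=
      (by simp only [add_re, ofReal_re]; linarith : 1 + c ≤ (z + c).re).trans (re_le_norm _)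
    simpa using norm_add_le_mul_norm (d := -(c : ℂ)) (by linarith : 0 < 1 + c) hzc

theorem isTheta_Gamma_add_div_Gamma_of_mem_Icc {t : ℝ} (ht0 : 0 ≤ t) (ht1 : t ≤ 1) :
    (fun z : ℂ => Gamma (z + t) / Gamma z) =Θ[𝓟 {z : ℂ | 1 ≤ z.re}] fun z => ‖z‖ ^ t := by
  refine ⟨.of_bound 4 ?_, .of_bound 8 ?_⟩ <;>
    filter_upwards [mem_principal_self _] with z (hz : 1 ≤ z.re) <;>
    rw [Real.norm_of_nonneg (by positivity)]
  · exact norm_Gamma_add_div_Gamma_le hz ht0 ht1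
  · exact rpow_le_mul_norm_Gamma_add_div_Gamma hz ht0 ht1

theorem isTheta_Gamma_add_one_div_Gamma_iff {γ : ℝ} (hγ : -1 < γ) :
    ((fun z : ℂ => Gamma (z + ↑(γ + 1)) / Gamma z) =Θ[𝓟 {z : ℂ | 1 ≤ z.re}]
        fun z => ‖z‖ ^ (γ + 1)) ↔
      (fun z : ℂ => Gamma (z + γ) / Gamma z) =Θ[𝓟 {z : ℂ | 1 ≤ z.re}] fun z => ‖z‖ ^ γ := by
  have hnorm : ∀ᶠ z : ℂ in 𝓟 {z : ℂ | 1 ≤ z.re}, ‖z‖ ≠ 0 :=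
    eventually_principal.2 fun z (hz : 1 ≤ z.re) => by linarith [re_le_norm z]
  have hshift : ∀ᶠ z : ℂ in 𝓟 {z : ℂ | 1 ≤ z.re}, z + γ ≠ 0 :=
    eventually_principal.2 fun z (hz : 1 ≤ z.re) h => by
      have h := congrArg re h
      simp only [add_re, ofReal_re, zero_re] at h
      linarith
  have hrec : (fun z : ℂ => Gamma (z + ↑(γ + 1)) / Gamma z) =ᶠ[𝓟 {z : ℂ | 1 ≤ z.re}]
      fun z => (z + γ) * (Gamma (z + γ) / Gamma z) := by
    filter_upwards [hshift] with z hz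
    rw [ofReal_add, ofReal_one, ← add_assoc, Gamma_add_one _ hz, mul_div_assoc]
  have hpow : (fun z : ℂ => ‖z‖ ^ (γ + 1)) =ᶠ[𝓟 {z : ℂ | 1 ≤ z.re}] fun z => ‖z‖ * ‖z‖ ^ γ := by
    filter_upwards [hnorm] with z hz
    rw [Real.rpow_add_one hz, mul_comm]
  have hθ : (fun z : ℂ => z + γ) =Θ[𝓟 {z : ℂ | 1 ≤ z.re}] fun z => ‖z‖ :=
    isTheta_norm_right.2 (isTheta_add_const hγ)
  rw [hrec.isTheta.isTheta_congr_left, hpow.isTheta.isTheta_congr_right]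
  refine ⟨fun h => ?_, hθ.mul⟩
  refine (EventuallyEq.isTheta ?_).trans ((hθ.inv.mul h).trans_eventuallyEq ?_)
  · filter_upwards [hshift] with z hz
    rw [inv_mul_cancel_left₀ hz]
  · filter_upwards [hnorm] with z hz
    exact inv_mul_cancel_left₀ hz _

theorem isTheta_Gamma_add_div_Gamma {γ : ℝ} (hγ : -1 < γ) :
    (fun z : ℂ => Gamma (z + γ) / Gamma z) =Θ[𝓟 {z : ℂ | 1 ≤ z.re}] fun z => ‖z‖ ^ γ := by
  obtain ⟨n, hn⟩ := exists_nat_ge γ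
  induction n generalizing γ with
  | zero =>
    exact (isTheta_Gamma_add_one_div_Gamma_iff hγ).1
      (isTheta_Gamma_add_div_Gamma_of_mem_Icc (by linarith) (by push_cast at hn; linarith))
  | succ n ih =>
    rcases le_or_gt γ n with hγn | hγn
    · exact ih hγ hγn
    · have hγ' : -1 < γ - 1 := by linarith [n.cast_nonneg (α := ℝ)]
      have h := ih hγ' (by push_cast at hn; linarith)
      simpa using (isTheta_Gamma_add_one_div_Gamma_iff hγ').2 h

theorem isTheta_Gamma_add_div_Gamma_add {α β : ℝ} (hα : -1 < α) (hβ : -1 < β) :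
    (fun z : ℂ => Gamma (z + α) / Gamma (z + β)) =Θ[𝓟 {z : ℂ | 1 ≤ z.re}]
      fun z => ‖z‖ ^ (α - β) := by
  refine (EventuallyEq.isTheta ?_).trans
    (((isTheta_Gamma_add_div_Gamma hα).div (isTheta_Gamma_add_div_Gamma hβ)).trans_eventuallyEq ?_)
  <;> filter_upwards [mem_principal_self _] with z (hz : 1 ≤ z.re)
  · rw [div_div_div_cancel_right₀ (Gamma_ne_zero_of_re_pos (by linarith))]
  · rw [Real.rpow_sub (by linarith [re_le_norm z])]

theorem norm_add_mul_I_rpow_le {x y s : ℝ} (hx : 1 ≤ x) (hs : 0 ≤ s) :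
    ‖(x : ℂ) + y * I‖ ^ s ≤ x ^ s * (1 + y ^ 2) ^ (s / 2) := by
  have hx0 : 0 ≤ x := by linarith
  calc ‖(x : ℂ) + y * I‖ ^ s = (x ^ 2 + y ^ 2) ^ (s / 2) := by
        rw [norm_add_mul_I, Real.sqrt_eq_rpow, ← Real.rpow_mul (by positivity)]
        ring_nf
    _ ≤ (x ^ 2 * (1 + y ^ 2)) ^ (s / 2) := by
        gcongr
        nlinarith [one_le_pow₀ (n := 2) hx, sq_nonneg y]
    _ = x ^ s * (1 + y ^ 2) ^ (s / 2) := by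
        rw [Real.mul_rpow (by positivity) (by positivity), ← Real.rpow_natCast,
          ← Real.rpow_mul hx0]
        ring_nf

end Complex

theorem gamma_product_shift_bound_pos_general (N : ℕ) (a b : ℕ → ℝ)
    (ha : ∀ i ∈ Icc 1 N, -1 < a i) (hb : ∀ i ∈ Icc 1 N, -1 < b i)
    (hS : 0 < ∑ i ∈ Icc 1 N, (a i - b i)) :
    ∃ C > 0, ∀ M : ℝ, 0 ≤ M → ∀ lam : ℝ,
      ‖∏ i ∈ Icc 1 N,
          Complex.Gamma ((a i : ℂ) + (M:ℂ) + 1 + Complex.I * lam) /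
            Complex.Gamma ((b i : ℂ) + (M:ℂ) + 1 + Complex.I * lam)‖ ≤
        C * (1 + M) ^ (∑ i ∈ Icc 1 N, (a i - b i)) *
          (1 + lam ^ 2) ^ ((∑ i ∈ Icc 1 N, (a i - b i)) / 2) := by
  obtain ⟨C, hC, hbound⟩ := (IsTheta.finsetProd fun i hi =>
    isTheta_Gamma_add_div_Gamma_add (ha i hi) (hb i hi)).isBigO.exists_pos
  refine ⟨C, hC, fun M hM lam => ?_⟩
  set z : ℂ := ((1 + M : ℝ) : ℂ) + lam * I
  have hz : 1 ≤ z.re := by simpa [z] using hM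
  calc ‖∏ i ∈ Icc 1 N,
          Gamma ((a i : ℂ) + M + 1 + I * lam) / Gamma ((b i : ℂ) + M + 1 + I * lam)‖
      = ‖∏ i ∈ Icc 1 N, Gamma (z + a i) / Gamma (z + b i)‖ := by
        refine congrArg norm (prod_congr rfl fun i _ => ?_)
        simp only [z]
        push_cast
        congr 2 <;> ring
    _ ≤ C * ‖∏ i ∈ Icc 1 N, ‖z‖ ^ (a i - b i)‖ := isBigOWith_principal.1 hbound z hz
    _ = C * ‖z‖ ^ ∑ i ∈ Icc 1 N, (a i - b i) := by
        rw [← Real.rpow_sum_of_pos (by linarith [re_le_norm z]),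
          Real.norm_of_nonneg (by positivity)]
    _ ≤ C * (1 + M) ^ (∑ i ∈ Icc 1 N, (a i - b i)) *
          (1 + lam ^ 2) ^ ((∑ i ∈ Icc 1 N, (a i - b i)) / 2) := by
        rw [mul_assoc]
        gcongr
        exact norm_add_mul_I_rpow_le (by linarith) hS.le

/-- Uniform-in-shift Gamma product estimate, case `S = ∑(a_i − b_i) > 0`:
`|∏ Γ(a_i+M+1+iλ)/Γ(b_i+M+1+iλ)| ≤ C (1+M)^S (1+λ²)^{S/2}`. -/
theorem gamma_product_shift_bound_pos (N : ℕ) (hN : 1 ≤ N) (a b : ℕ → ℝ)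
    (ha : ∀ i ∈ Icc 1 N, -1 < a i) (hb : ∀ i ∈ Icc 1 N, -1 < b i)
    (hS : 0 < ∑ i ∈ Icc 1 N, (a i - b i)) :
    ∃ C > 0, ∀ M : ℝ, 0 ≤ M → ∀ lam : ℝ,
      ‖∏ i ∈ Icc 1 N,
          Complex.Gamma ((a i : ℂ) + (M:ℂ) + 1 + Complex.I * lam) /
            Complex.Gamma ((b i : ℂ) + (M:ℂ) + 1 + Complex.I * lam)‖ ≤
        C * (1 + M) ^ (∑ i ∈ Icc 1 N, (a i - b i)) *
          (1 + lam ^ 2) ^ ((∑ i ∈ Icc 1 N, (a i - b i)) / 2) :=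
  gamma_product_shift_bound_pos_general N a b ha hb hS
end

section
/- There exists a constant C > 0 such that for every complex z with Re(z) ≥ 1 and every real ε with |ε| ≤ 1/2: e^{−C|ε|} ≤ |Γ(z) · exp(ε Log z) / Γ(z + ε)| ≤ e^{C|ε|}, where Log denotes the principal branch of the complex logarithm. -/
/-!
By Euler's limit `Γ(w) = lim GammaSeq w n`, the logarithm of `‖Γ(z) z^ε / Γ(z + ε)‖` is the limit of
`fₙ(ε) - fₙ(0)`, where `fₙ(t) = ∑_{j ≤ n} log ‖z + j + t‖ - t (log n - log ‖z‖)`. The derivative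
`fₙ'(t) = ∑_{j ≤ n} Re (z + t + j)⁻¹ - log n + log ‖z‖` is a truncated digamma function minus a
logarithm: comparing the sum with `∫ dt / (w + t) = log (w + n + 1) - log w` (each term costs at
most `(j + 1/2)⁻²`) bounds it by `7` once `n ≥ ‖z‖ + 2`, and the mean value theorem gives
`|fₙ(ε) - fₙ(0)| ≤ 7 |ε|`.
-/

open Complex Finset Filter Topology
open scoped Nat

lemma hasDerivAt_log_const_add {u w : ℂ} (h : u + w ∈ slitPlane) :
    HasDerivAt (fun v : ℂ => log (u + v)) (u + w)⁻¹ w := by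
  simpa using ((hasDerivAt_id w).const_add u).clog h

lemma hasDerivAt_log_norm_add_ofReal {u : ℂ} {t : ℝ} (h : u + t ∈ slitPlane) :
    HasDerivAt (fun s : ℝ => Real.log ‖u + s‖) ((u + t)⁻¹).re t := by
  simpa [log_re] using (hasDerivAt_log_const_add h).real_of_complex

lemma norm_log_add_one_sub_log_sub_inv_le {u : ℂ} (hu : 0 < u.re) :
    ‖log (u + 1) - log u - u⁻¹‖ ≤ (u.re ^ 2)⁻¹ := by
  have hre : ∀ t ∈ Set.Icc (0 : ℝ) 1, u.re ≤ (u + t).re := fun t ht => by simpa using ht.1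
  have hderiv : ∀ t ∈ Set.Icc (0 : ℝ) 1,
      HasDerivWithinAt (fun s : ℝ => log (u + s) - s * u⁻¹) ((u + t)⁻¹ - u⁻¹) (Set.Icc 0 1) t :=
    fun t ht => by
      have h := (hasDerivAt_log_const_add (w := (t : ℂ)) (mem_slitPlane_iff.2 (.inl
        (hu.trans_le (hre t ht))))).comp_ofReal
      simpa using (h.fun_sub ((hasDerivAt_id t).ofReal_comp.mul_const u⁻¹)).hasDerivWithinAt
  have hbound : ∀ t ∈ Set.Icc (0 : ℝ) 1, ‖(u + t)⁻¹ - u⁻¹‖ ≤ (u.re ^ 2)⁻¹ := fun t ht => by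
    have hu0 : u ≠ 0 := fun h => by simp [h] at hu
    have hut : u + t ≠ 0 := fun h => by simpa [h] using hu.trans_le (hre t ht)
    have hnorm_u : u.re ≤ ‖u‖ := re_le_norm u
    have hnorm_ut : u.re ≤ ‖u + t‖ := (hre t ht).trans (re_le_norm _)
    rw [inv_sub_inv hut hu0, norm_div, norm_mul, norm_sub_rev, add_sub_cancel_left, norm_real,
      Real.norm_of_nonneg ht.1, div_le_iff₀ (by positivity)]
    calc t ≤ 1 := ht.2
      _ = (u.re ^ 2)⁻¹ * (u.re * u.re) := by field_simp
      _ ≤ (u.re ^ 2)⁻¹ * (‖u + t‖ * ‖u‖) := by gcongr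
  simpa [sub_sub, add_comm u⁻¹] using
    (convex_Icc (0 : ℝ) 1).norm_image_sub_le_of_norm_hasDerivWithin_le hderiv hbound
      (Set.left_mem_Icc.2 zero_le_one) (Set.right_mem_Icc.2 zero_le_one)

lemma sum_range_inv_sq_add_half_le (n : ℕ) : ∑ j ∈ range n, (((j : ℝ) + 1 / 2) ^ 2)⁻¹ ≤ 5 := by
  -- compare with the telescoping sum of `1 / j - 1 / (j + 1)`, using `j (j + 1) ≤ (j + 1/2)²`
  have key : ∀ n : ℕ, ∑ j ∈ range (n + 1), (((j : ℝ) + 1 / 2) ^ 2)⁻¹ ≤ 5 - ((n : ℝ) + 1)⁻¹ := by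
    intro n
    induction n with
    | zero => norm_num
    | succ k ih =>
      have hstep : (((k : ℝ) + 1 + 1 / 2) ^ 2)⁻¹ ≤ ((k : ℝ) + 1)⁻¹ - ((k : ℝ) + 1 + 1)⁻¹ := by
        have hk : (0 : ℝ) < k + 1 := by positivity
        rw [inv_sub_inv hk.ne' (by positivity : (k : ℝ) + 1 + 1 ≠ 0), add_sub_cancel_left,
          inv_eq_one_div]
        exact one_div_le_one_div_of_le (by positivity) (by nlinarith)
      rw [sum_range_succ]
      push_cast
      linarith
  cases n with
  | zero => norm_num
  | succ n => linarith [key n, inv_pos.2 (n.cast_add_one_pos (α := ℝ))]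

lemma norm_sum_inv_sub_log_le {w : ℂ} (hw : 1 / 2 ≤ w.re) (n : ℕ) :
    ‖∑ j ∈ range n, (w + j)⁻¹ - (log (w + n) - log w)‖ ≤ 5 := by
  have htelescope : log (w + n) - log w = ∑ j ∈ range n, (log (w + j + 1) - log (w + j)) := by
    simpa [add_assoc] using (sum_range_sub (fun j : ℕ => log (w + j)) n).symm
  have hre : ∀ j : ℕ, (j : ℝ) + 1 / 2 ≤ (w + j).re := fun j => by simp; linarith
  calc ‖∑ j ∈ range n, (w + j)⁻¹ - (log (w + n) - log w)‖
      = ‖∑ j ∈ range n, (log (w + j + 1) - log (w + j) - (w + j)⁻¹)‖ := by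
        rw [htelescope, ← sum_sub_distrib, ← norm_neg, ← sum_neg_distrib]
        simp_rw [neg_sub]
    _ ≤ ∑ j ∈ range n, (((j : ℝ) + 1 / 2) ^ 2)⁻¹ := by
        refine (norm_sum_le _ _).trans (sum_le_sum fun j _ => ?_)
        refine (norm_log_add_one_sub_log_sub_inv_le (by linarith [hre j])).trans ?_
        gcongr
        exact hre j
    _ ≤ 5 := sum_range_inv_sq_add_half_le n

lemma abs_log_sub_log_le_one {x y : ℝ} (hx : 0 < x) (hy : 0 < y) (hxy : x ≤ 2 * y)
    (hyx : y ≤ 2 * x) : |Real.log x - Real.log y| ≤ 1 := by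
  have hx' := Real.log_le_sub_one_of_pos (div_pos hx hy)
  have hy' := Real.log_le_sub_one_of_pos (div_pos hy hx)
  rw [Real.log_div hx.ne' hy.ne'] at hx'
  rw [Real.log_div hy.ne' hx.ne'] at hy'
  have hxy' : x / y ≤ 2 := (div_le_iff₀ hy).2 hxy
  have hyx' : y / x ≤ 2 := (div_le_iff₀ hx).2 hyx
  rw [abs_le]
  constructor <;> linarith

lemma abs_sum_re_inv_sub_log_le {z : ℂ} (hz : 1 ≤ z.re) {t : ℝ} (ht : |t| ≤ 1 / 2) {n : ℕ}
    (hn : ‖z‖ + 2 ≤ n) :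
    |∑ j ∈ range (n + 1), ((z + t + j)⁻¹).re - Real.log n + Real.log ‖z‖| ≤ 7 := by
  set w := z + t with hw
  obtain ⟨ht₁, ht₂⟩ := abs_le.1 ht
  have hwre : 1 / 2 ≤ w.re := by simp [hw]; linarith
  have hz_norm : 1 ≤ ‖z‖ := hz.trans (re_le_norm z)
  have hw_norm : 1 / 2 ≤ ‖w‖ := hwre.trans (re_le_norm w)
  have hdist : ‖w - z‖ ≤ 1 / 2 := by simpa [hw] using ht
  have hwz : |Real.log ‖z‖ - Real.log ‖w‖| ≤ 1 := by
    refine abs_log_sub_log_le_one (by linarith) (by linarith) ?_ ?_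
    · linarith [norm_sub_norm_le z w, norm_sub_rev z w]
    · linarith [norm_sub_norm_le w z]
  have hwn : |Real.log ‖w + (n + 1 : ℕ)‖ - Real.log n| ≤ 1 := by
    have hlow : (n : ℝ) ≤ ‖w + (n + 1 : ℕ)‖ :=
      le_trans (by simp; linarith) (re_le_norm _)
    have hup : ‖w + (n + 1 : ℕ)‖ ≤ 2 * n := by
      calc ‖w + (n + 1 : ℕ)‖ ≤ ‖z‖ + ‖(t : ℂ)‖ + ‖((n + 1 : ℕ) : ℂ)‖ := norm_add₃_le
        _ ≤ 2 * n := by rw [norm_real, Real.norm_eq_abs, norm_natCast]; push_cast; linarith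
    exact abs_log_sub_log_le_one (by linarith) (by linarith) hup (by linarith)
  have hD := abs_le.1 ((abs_re_le_norm _).trans (norm_sum_inv_sub_log_le hwre (n + 1)))
  rw [← re_sum]
  simp only [sub_re, log_re] at hD
  rw [abs_le] at hwz hwn ⊢
  constructor <;> linarith [hD.1, hD.2, hwz.1, hwz.2, hwn.1, hwn.2]

lemma log_norm_GammaSeq_s14 {w : ℂ} (hw : ∀ m : ℕ, w + m ≠ 0) {n : ℕ} (hn : n ≠ 0) :
    Real.log ‖GammaSeq w n‖ =
      w.re * Real.log n + Real.log n ! - ∑ j ∈ range (n + 1), Real.log ‖w + j‖ := by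
  have hn' : (0 : ℝ) < n := Nat.cast_pos.2 (Nat.pos_of_ne_zero hn)
  have hfact : (n ! : ℝ) ≠ 0 := by positivity
  have hprod : ∀ j ∈ range (n + 1), ‖w + j‖ ≠ 0 := fun j _ => norm_ne_zero_iff.2 (hw j)
  rw [GammaSeq, norm_div, norm_mul, ← ofReal_natCast, norm_cpow_eq_rpow_re_of_pos hn',
    norm_natCast, norm_prod, Real.log_div (by positivity) (prod_ne_zero_iff.2 hprod),
    Real.log_mul (by positivity) hfact, Real.log_rpow hn', Real.log_prod hprod]

lemma log_norm_GammaSeq_mul_exp_div {z : ℂ} {ε : ℝ} (hz : ∀ m : ℕ, z + m ≠ 0)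
    (hzε : ∀ m : ℕ, z + ε + m ≠ 0) {n : ℕ} (hn : n ≠ 0) :
    Real.log ‖GammaSeq z n * exp (ε * log z) / GammaSeq (z + ε) n‖ =
      ∑ j ∈ range (n + 1), (Real.log ‖z + ε + j‖ - Real.log ‖z + j‖) -
        ε * (Real.log n - Real.log ‖z‖) := by
  have hΓ : ∀ {w : ℂ}, (∀ m : ℕ, w + m ≠ 0) → ‖GammaSeq w n‖ ≠ 0 := fun hw =>
    norm_ne_zero_iff.2 <| div_ne_zero (mul_ne_zero (by simp [cpow_eq_zero_iff, hn])
      (by simp [Nat.factorial_ne_zero])) (prod_ne_zero_iff.2 fun j _ => hw j)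
  rw [norm_div, norm_mul, norm_exp, re_ofReal_mul, log_re,
    Real.log_div (mul_ne_zero (hΓ hz) (Real.exp_pos _).ne') (hΓ hzε),
    Real.log_mul (hΓ hz) (Real.exp_pos _).ne', Real.log_exp, log_norm_GammaSeq_s14 hz hn,
    log_norm_GammaSeq_s14 hzε hn, sum_sub_distrib]
  simp only [add_re, ofReal_re]
  ring

lemma add_natCast_ne_zero_of_re_pos {w : ℂ} (hw : 0 < w.re) (m : ℕ) : w + m ≠ 0 := fun h => by
  have := congrArg re h
  simp only [add_re, natCast_re, zero_re] at this
  linarith [m.cast_nonneg (α := ℝ)]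

lemma abs_sum_log_norm_add_sub_log_norm_le {z : ℂ} (hz : 1 ≤ z.re) {ε : ℝ} (hε : |ε| ≤ 1 / 2)
    {n : ℕ} (hn : ‖z‖ + 2 ≤ n) :
    |∑ j ∈ range (n + 1), (Real.log ‖z + ε + j‖ - Real.log ‖z + j‖) -
        ε * (Real.log n - Real.log ‖z‖)| ≤ 7 * |ε| := by
  let f : ℝ → ℝ := fun t => ∑ j ∈ range (n + 1), Real.log ‖z + j + t‖ -
    t * (Real.log n - Real.log ‖z‖)
  let f' : ℝ → ℝ := fun t => ∑ j ∈ range (n + 1), ((z + j + t)⁻¹).re -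
    (Real.log n - Real.log ‖z‖)
  have hball : ∀ {t : ℝ}, t ∈ Metric.closedBall (0 : ℝ) (1 / 2) ↔ |t| ≤ 1 / 2 := by
    simp [Real.norm_eq_abs]
  have hderiv : ∀ t ∈ Metric.closedBall (0 : ℝ) (1 / 2),
      HasDerivWithinAt f (f' t) (Metric.closedBall 0 (1 / 2)) t := fun t ht => by
    have hre : ∀ j : ℕ, 0 < (z + j + t).re := fun j => by
      have := (abs_le.1 (hball.1 ht)).1
      simp only [add_re, natCast_re, ofReal_re]
      linarith [j.cast_nonneg (α := ℝ)]
    have := (HasDerivAt.fun_sum (u := range (n + 1)) fun j _ =>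
      hasDerivAt_log_norm_add_ofReal (mem_slitPlane_iff.2 (.inl (hre j)))).fun_sub
      ((hasDerivAt_id t).mul_const (Real.log n - Real.log ‖z‖))
    simp only [id, one_mul] at this
    exact this.hasDerivWithinAt
  have hbound : ∀ t ∈ Metric.closedBall (0 : ℝ) (1 / 2), ‖f' t‖ ≤ 7 := fun t ht => by
    have := abs_sum_re_inv_sub_log_le hz (hball.1 ht) hn
    simp_rw [add_right_comm z (t : ℂ)] at this
    simpa only [Real.norm_eq_abs, f', sub_sub_eq_add_sub, add_sub_right_comm] using this
  have := (convex_closedBall (0 : ℝ) (1 / 2)).norm_image_sub_le_of_norm_hasDerivWithin_le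
    hderiv hbound (Metric.mem_closedBall_self (by norm_num)) (hball.2 hε)
  simp only [f, Real.norm_eq_abs, sub_zero, ofReal_zero, add_zero, zero_mul] at this
  convert this using 2
  rw [sum_sub_distrib]
  simp only [add_right_comm]
  ring

lemma Gamma_mul_exp_div_Gamma_ne_zero {z : ℂ} (hz : 0 < z.re) {ε : ℝ} (hzε : 0 < z.re + ε) :
    Gamma z * exp (ε * log z) / Gamma (z + ε) ≠ 0 :=
  div_ne_zero (mul_ne_zero (Gamma_ne_zero_of_re_pos hz) (exp_ne_zero _))
    (Gamma_ne_zero_of_re_pos (by simpa using hzε))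

lemma abs_log_norm_Gamma_mul_exp_div_le {z : ℂ} (hz : 1 ≤ z.re) {ε : ℝ} (hε : |ε| ≤ 1 / 2) :
    |Real.log ‖Gamma z * exp (ε * log z) / Gamma (z + ε)‖| ≤ 7 * |ε| := by
  obtain ⟨hε₁, -⟩ := abs_le.1 hε
  have hz₀ : 0 < z.re := by linarith
  have hzε : 0 < (z + ε).re := by simp; linarith
  have hlim : Tendsto (fun n => Real.log ‖GammaSeq z n * exp (ε * log z) / GammaSeq (z + ε) n‖)
      atTop (𝓝 (Real.log ‖Gamma z * exp (ε * log z) / Gamma (z + ε)‖)) :=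
    ((((GammaSeq_tendsto_Gamma z).mul_const _).div (GammaSeq_tendsto_Gamma (z + ε))
      (Gamma_ne_zero_of_re_pos hzε)).norm).log
      (norm_ne_zero_iff.2 (Gamma_mul_exp_div_Gamma_ne_zero hz₀ (by simpa using hzε)))
  refine le_of_tendsto hlim.abs ?_
  filter_upwards [tendsto_natCast_atTop_atTop.eventually_ge_atTop (‖z‖ + 2)] with n hn
  have hn₀ : n ≠ 0 := by rintro rfl; simp at hn; linarith [norm_nonneg z]
  rw [log_norm_GammaSeq_mul_exp_div (add_natCast_ne_zero_of_re_pos hz₀)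
    (add_natCast_ne_zero_of_re_pos hzε) hn₀]
  exact abs_sum_log_norm_add_sub_log_norm_le hz hε hn

/-- Quantitative Gamma quotient estimate from Binet's formula:
`Γ(z)/Γ(z+ε) = z^{−ε} e^{h(z;ε)}` with `|h(z;ε)| ≤ C|ε|` uniformly on `Re(z) ≥ 1`,
phrased as `e^{−C|ε|} ≤ |Γ(z) e^{ε Log z} / Γ(z+ε)| ≤ e^{C|ε|}`. -/
theorem gamma_quotient_binet_estimate :
    ∃ C > 0, ∀ z : ℂ, 1 ≤ z.re → ∀ ε : ℝ, |ε| ≤ 1/2 →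
      Real.exp (-C * |ε|) ≤
          ‖Complex.Gamma z * Complex.exp ((ε:ℂ) * Complex.log z) /
              Complex.Gamma (z + (ε:ℂ))‖ ∧
        ‖Complex.Gamma z * Complex.exp ((ε:ℂ) * Complex.log z) /
            Complex.Gamma (z + (ε:ℂ))‖ ≤ Real.exp (C * |ε|) := by
  refine ⟨7, by norm_num, fun z hz ε hε => ?_⟩
  have hpos : 0 < ‖Gamma z * exp (ε * log z) / Gamma (z + ε)‖ :=
    norm_pos_iff.2 (Gamma_mul_exp_div_Gamma_ne_zero (by linarith) (by linarith [(abs_le.1 hε).1]))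
  obtain ⟨hlow, hup⟩ := abs_le.1 (abs_log_norm_Gamma_mul_exp_div_le hz hε)
  rw [neg_mul]
  exact ⟨(Real.le_log_iff_exp_le hpos).1 hlow, (Real.log_le_iff_le_exp hpos).1 hup⟩
end

section
/- Let γ > 2, ν ∈ (−1, 1), t ≥ 0, and let F : (0,∞) → [0,∞) be measurable. For τ ≥ 0 define u(x, τ) = (1/Γ(1 − 2/γ)) e^{−τ} x^{−1/γ} ∫₀^1 e^{−x w (1 − e^{−γτ})} F(e^{−γτ} x w) w^{1/γ} (1−w)^{−2/γ} dw. Then ∫₀^∞ x^{(2+2ν)/γ − 1} u(x, t)² dx ≤ e^{−2(1−ν) t} ∫₀^∞ x^{(2+2ν)/γ − 1} u(x, 0)² dx (both sides taken in [0,∞]). -/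
open MeasureTheory Set ENNReal

/-! Dropping the damping factor from the integrand bounds the solution by a rescaled copy of its
initial profile, `u(x,t) ≤ e^{-2t} u(e^{-γt} x, 0)`. The weight `x^β` with `β = (2+2ν)/γ - 1` is
homogeneous, so the substitution `y = e^{-γt} x` turns the weighted `L²` norm of `u(·,t)` into
`e^{-4t} e^{γ(β+1)t} = e^{-2(1-ν)t}` times that of `u(·,0)`. -/

lemma lintegral_comp_mul_left_Ioi (g : ℝ → ℝ≥0∞) (a : ℝ) {b : ℝ} (hb : 0 < b) :
    ∫⁻ x in Ioi a, g (b * x) = ENNReal.ofReal b⁻¹ * ∫⁻ x in Ioi (b * a), g x := by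
  let e := MeasurableEquiv.mulLeft₀ b hb.ne'
  have hmap : volume.map e = ENNReal.ofReal b⁻¹ • volume := by
    rw [MeasurableEquiv.coe_mulLeft₀, Real.map_volume_mul_left hb.ne', abs_of_pos (inv_pos.2 hb)]
  have hind : (Ioi a).indicator (fun x => g (b * x)) = fun x => (Ioi (b * a)).indicator g (e x) := by
    ext x
    simp only [indicator, mem_Ioi, e, MeasurableEquiv.coe_mulLeft₀, mul_lt_mul_iff_right₀ hb]
  rw [← lintegral_indicator measurableSet_Ioi, ← lintegral_indicator measurableSet_Ioi, hind,
    ← lintegral_map_equiv, hmap, lintegral_smul_measure, smul_eq_mul]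

lemma lintegral_Ioi_rpow_mul_comp_mul_left (g : ℝ → ℝ≥0∞) (β : ℝ) {b : ℝ} (hb : 0 < b) :
    ∫⁻ x in Ioi 0, ENNReal.ofReal (x ^ β) * g (b * x) =
      ENNReal.ofReal (b ^ (-β - 1)) * ∫⁻ x in Ioi 0, ENNReal.ofReal (x ^ β) * g x := by
  have hweight : ∀ x ∈ Ioi (0 : ℝ), ENNReal.ofReal (x ^ β) * g (b * x) =
      ENNReal.ofReal (b ^ (-β)) * (ENNReal.ofReal ((b * x) ^ β) * g (b * x)) := by
    intro x hx
    rw [← mul_assoc, ← ENNReal.ofReal_mul (by positivity), Real.mul_rpow hb.le (le_of_lt hx),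
      Real.rpow_neg hb.le, inv_mul_cancel_left₀ (by positivity)]
  rw [setLIntegral_congr_fun measurableSet_Ioi hweight, lintegral_const_mul' _ _ ofReal_ne_top,
    lintegral_comp_mul_left_Ioi (fun y => ENNReal.ofReal (y ^ β) * g y) 0 hb, mul_zero, ← mul_assoc,
    ← ENNReal.ofReal_mul (by positivity), ← Real.rpow_neg_one, ← Real.rpow_add hb, sub_eq_add_neg]

lemma ENNReal.ofReal_mul_le_of_le_one {a : ℝ} (ha₀ : 0 ≤ a) (ha₁ : a ≤ 1) (b : ℝ) :
    ENNReal.ofReal (a * b) ≤ ENNReal.ofReal b := by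
  rw [ENNReal.ofReal_mul ha₀]
  exact mul_le_of_le_one_left' (ENNReal.ofReal_le_one.mpr ha₁)

noncomputable def fragmentationProfile (γ : ℝ) (F : ℝ → ℝ) (x τ : ℝ) : ℝ≥0∞ :=
  ENNReal.ofReal ((1 / Real.Gamma (1 - 2/γ)) * Real.exp (-τ) * x ^ (-(1/γ))) *
    ∫⁻ w in Ioo (0:ℝ) 1,
      ENNReal.ofReal (Real.exp (-(x * w * (1 - Real.exp (-(γ * τ))))) *
        F (Real.exp (-(γ * τ)) * x * w) * w ^ (1/γ) * (1 - w) ^ (-(2/γ)))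

lemma fragmentationProfile_zero (γ : ℝ) (F : ℝ → ℝ) (x : ℝ) :
    fragmentationProfile γ F x 0 = ENNReal.ofReal ((1 / Real.Gamma (1 - 2/γ)) * x ^ (-(1/γ))) *
      ∫⁻ w in Ioo (0:ℝ) 1, ENNReal.ofReal (F (x * w) * w ^ (1/γ) * (1 - w) ^ (-(2/γ))) := by
  simp [fragmentationProfile]

lemma exp_neg_mul_mul_rpow_neg_one_div {γ : ℝ} (hγ : γ ≠ 0) (t : ℝ) {x : ℝ} (hx : 0 ≤ x) :
    (Real.exp (-(γ * t)) * x) ^ (-(1/γ)) = Real.exp t * x ^ (-(1/γ)) := by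
  rw [Real.mul_rpow (Real.exp_pos _).le hx, ← Real.exp_mul]
  congr 2
  field_simp

lemma fragmentationProfile_le {γ t x : ℝ} (hγ : 0 < γ) (ht : 0 ≤ t) (hx : 0 ≤ x) (F : ℝ → ℝ) :
    fragmentationProfile γ F x t ≤
      ENNReal.ofReal (Real.exp (-2 * t)) * fragmentationProfile γ F (Real.exp (-(γ * t)) * x) 0 := by
  have hdamp : ∀ w ∈ Ioo (0 : ℝ) 1,
      Real.exp (-(x * w * (1 - Real.exp (-(γ * t))))) ≤ 1 := by
    intro w hw
    have : Real.exp (-(γ * t)) ≤ 1 := Real.exp_le_one_iff.2 (by nlinarith)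
    exact Real.exp_le_one_iff.2 (neg_nonpos.2 (mul_nonneg (mul_nonneg hx hw.1.le) (by linarith)))
  have hprefactor : (1 / Real.Gamma (1 - 2/γ)) * Real.exp (-t) * x ^ (-(1/γ)) =
      Real.exp (-2 * t) * ((1 / Real.Gamma (1 - 2/γ)) * (Real.exp (-(γ * t)) * x) ^ (-(1/γ))) := by
    rw [exp_neg_mul_mul_rpow_neg_one_div hγ.ne' t hx, show -t = -2 * t + t by ring, Real.exp_add]
    ring
  rw [fragmentationProfile, fragmentationProfile_zero, hprefactor,
    ENNReal.ofReal_mul (Real.exp_pos _).le, mul_assoc]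
  refine mul_le_mul_right (mul_le_mul_right (setLIntegral_mono' measurableSet_Ioo fun w hw => ?_) _) _
  simpa only [mul_assoc] using ENNReal.ofReal_mul_le_of_le_one (Real.exp_pos _).le (hdamp w hw)
    (F (Real.exp (-(γ * t)) * x * w) * w ^ (1/γ) * (1 - w) ^ (-(2/γ)))

lemma lintegral_rpow_mul_fragmentationProfile_sq_le {γ t : ℝ} (hγ : 0 < γ) (ht : 0 ≤ t)
    (F : ℝ → ℝ) (β : ℝ) :
    ∫⁻ x in Ioi 0, ENNReal.ofReal (x ^ β) * fragmentationProfile γ F x t ^ 2 ≤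
      ENNReal.ofReal (Real.exp ((γ * (β + 1) - 4) * t)) *
        ∫⁻ x in Ioi 0, ENNReal.ofReal (x ^ β) * fragmentationProfile γ F x 0 ^ 2 := by
  set c := Real.exp (-(γ * t))
  have hsq : ∀ x ∈ Ioi (0 : ℝ), fragmentationProfile γ F x t ^ 2 ≤
      ENNReal.ofReal (Real.exp (-4 * t)) * fragmentationProfile γ F (c * x) 0 ^ 2 := by
    intro x hx
    calc fragmentationProfile γ F x t ^ 2
        ≤ (ENNReal.ofReal (Real.exp (-2 * t)) * fragmentationProfile γ F (c * x) 0) ^ 2 := by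
          gcongr
          exact fragmentationProfile_le hγ ht (le_of_lt hx) F
      _ = _ := by
          rw [mul_pow, ← ENNReal.ofReal_pow (Real.exp_pos _).le, ← Real.exp_nat_mul]
          congr 3
          push_cast
          ring
  have hexp : Real.exp (-4 * t) * c ^ (-β - 1) = Real.exp ((γ * (β + 1) - 4) * t) := by
    rw [← Real.exp_mul, ← Real.exp_add]
    ring_nf
  calc ∫⁻ x in Ioi 0, ENNReal.ofReal (x ^ β) * fragmentationProfile γ F x t ^ 2
      ≤ ∫⁻ x in Ioi 0, ENNReal.ofReal (Real.exp (-4 * t)) *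
          (ENNReal.ofReal (x ^ β) * fragmentationProfile γ F (c * x) 0 ^ 2) := by
        refine setLIntegral_mono' measurableSet_Ioi fun x hx => ?_
        rw [mul_left_comm]
        gcongr
        exact hsq x hx
    _ = _ := by
        rw [lintegral_const_mul' _ _ ofReal_ne_top,
          lintegral_Ioi_rpow_mul_comp_mul_left (fun y => fragmentationProfile γ F y 0 ^ 2) β
            (Real.exp_pos _), ← mul_assoc, ← ENNReal.ofReal_mul (Real.exp_pos _).le, hexp]

theorem continuous_spectrum_weighted_decay_general (γ : ℝ) (hγ : 2 < γ)
    (ν : ℝ) (t : ℝ) (ht : 0 ≤ t)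
    (F : ℝ → ℝ)
    (u : ℝ → ℝ → ℝ≥0∞)
    (hu : ∀ x τ : ℝ, u x τ =
      ENNReal.ofReal ((1 / Real.Gamma (1 - 2/γ)) * Real.exp (-τ) * x ^ (-(1/γ))) *
        ∫⁻ w in Ioo (0:ℝ) 1,
          ENNReal.ofReal (Real.exp (-(x * w * (1 - Real.exp (-(γ * τ))))) *
            F (Real.exp (-(γ * τ)) * x * w) * w ^ (1/γ) * (1 - w) ^ (-(2/γ)))) :
    ∫⁻ x in Ioi (0:ℝ), ENNReal.ofReal (x ^ ((2 + 2*ν)/γ - 1)) * (u x t) ^ 2 ≤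
      ENNReal.ofReal (Real.exp (-2 * (1 - ν) * t)) *
        ∫⁻ x in Ioi (0:ℝ), ENNReal.ofReal (x ^ ((2 + 2*ν)/γ - 1)) * (u x 0) ^ 2 := by
  have hγ₀ : 0 < γ := by linarith
  obtain rfl : u = fragmentationProfile γ F := funext fun x => funext (hu x)
  have hrate : γ * ((2 + 2 * ν) / γ - 1 + 1) - 4 = -2 * (1 - ν) := by
    field_simp
    ring
  simpa only [hrate] using lintegral_rpow_mul_fragmentationProfile_sq_le hγ₀ ht F ((2 + 2*ν)/γ - 1)

/-- Sharp weighted-`L²` decay of the explicit representation of the fragmentation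
semigroup along the continuous spectrum:
`∫₀^∞ x^{(2+2ν)/γ−1} u(x,t)² dx ≤ e^{−2(1−ν)t} ∫₀^∞ x^{(2+2ν)/γ−1} u(x,0)² dx`. -/
theorem continuous_spectrum_weighted_decay (γ : ℝ) (hγ : 2 < γ)
    (ν : ℝ) (hν : ν ∈ Ioo (-1:ℝ) 1) (t : ℝ) (ht : 0 ≤ t)
    (F : ℝ → ℝ) (hF : Measurable F) (hFnonneg : ∀ x : ℝ, 0 ≤ F x)
    (u : ℝ → ℝ → ℝ≥0∞)
    (hu : ∀ x τ : ℝ, u x τ =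
      ENNReal.ofReal ((1 / Real.Gamma (1 - 2/γ)) * Real.exp (-τ) * x ^ (-(1/γ))) *
        ∫⁻ w in Ioo (0:ℝ) 1,
          ENNReal.ofReal (Real.exp (-(x * w * (1 - Real.exp (-(γ * τ))))) *
            F (Real.exp (-(γ * τ)) * x * w) * w ^ (1/γ) * (1 - w) ^ (-(2/γ)))) :
    ∫⁻ x in Ioi (0:ℝ), ENNReal.ofReal (x ^ ((2 + 2*ν)/γ - 1)) * (u x t) ^ 2 ≤
      ENNReal.ofReal (Real.exp (-2 * (1 - ν) * t)) *
        ∫⁻ x in Ioi (0:ℝ), ENNReal.ofReal (x ^ ((2 + 2*ν)/γ - 1)) * (u x 0) ^ 2 :=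
  continuous_spectrum_weighted_decay_general γ hγ ν t ht F u hu
end

section
/- Let γ > 0, q > 0, and μ ∈ ℂ. Define Ũ(z) = Γ(−z + 2/γ + 1) Γ(z + q/γ) / Γ(−z + (2−μ)/γ + 1) (with 1/Γ the entire reciprocal Gamma function). Then for every complex z such that z + q/γ is not a nonpositive integer and 2/γ − z is not a nonpositive integer: (−μ − γ z + 2) Ũ(z) = ((q+2)/(z + q/γ) − γ) Ũ(z+1). -/
/-- Mellin eigenvalue equation in the degenerate case `p(s) = (q+2) s^q`:
`(−μ − γz + 2) Ũ(z) = ((q+2)/(z+q/γ) − γ) Ũ(z+1)` for the Gamma-quotient solution. -/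
theorem degenerate_eigenfunction_mellin_equation (γ q : ℝ) (hγ : 0 < γ) (hq : 0 < q) (μ : ℂ)
    (U : ℂ → ℂ)
    (hU : ∀ z : ℂ, U z = Complex.Gamma (-z + 2/(γ:ℂ) + 1) * Complex.Gamma (z + (q:ℂ)/(γ:ℂ)) /
        Complex.Gamma (-z + (2 - μ)/(γ:ℂ) + 1)) :
    ∀ z : ℂ, (∀ n : ℕ, z + (q:ℂ)/(γ:ℂ) ≠ -(n:ℂ)) → (∀ n : ℕ, 2/(γ:ℂ) - z ≠ -(n:ℂ)) →
      (-μ - (γ:ℂ) * z + 2) * U z = (((q:ℂ) + 2)/(z + (q:ℂ)/(γ:ℂ)) - (γ:ℂ)) * U (z + 1) := by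
  intro z hbz haz
  have hγ0 : (γ:ℂ) ≠ 0 := Complex.ofReal_ne_zero.2 hγ.ne'
  set b : ℂ := z + (q:ℂ)/(γ:ℂ) with hb
  set d : ℂ := 2/(γ:ℂ) - z with hd
  set e : ℂ := (2 - μ)/(γ:ℂ) - z with he
  have hb0 : b ≠ 0 := by simpa using hbz 0
  have hd0 : d ≠ 0 := by simpa using haz 0
  have hGb : Complex.Gamma b ≠ 0 := Complex.Gamma_ne_zero hbz
  have hGd : Complex.Gamma d ≠ 0 := Complex.Gamma_ne_zero haz
  have e1 : -z + 2/(γ:ℂ) + 1 = d + 1 := by rw [hd]; ring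
  have e2 : -(z+1) + 2/(γ:ℂ) + 1 = d := by rw [hd]; ring
  have e3 : (z+1) + (q:ℂ)/(γ:ℂ) = b + 1 := by rw [hb]; ring
  have e4 : -z + (2-μ)/(γ:ℂ) + 1 = e + 1 := by rw [he]; ring
  have e5 : -(z+1) + (2-μ)/(γ:ℂ) + 1 = e := by rw [he]; ring
  have key1 : (-μ - (γ:ℂ)*z + 2) = (γ:ℂ) * e := by
    rw [he]; field_simp; ring
  have hnum : (q:ℂ) + 2 - (γ:ℂ)*b = (γ:ℂ)*d := by
    rw [hb, hd]; field_simp; ring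
  clear_value b d e
  have key2 : (((q:ℂ) + 2)/b - (γ:ℂ)) = (γ:ℂ) * d / b := by
    rw [← hnum]; field_simp
  rw [hU z, hU (z+1), show z + (q:ℂ)/(γ:ℂ) = b from hb.symm, e1, e2, e3, e4, e5, key1, key2,
    Complex.Gamma_add_one d hd0, Complex.Gamma_add_one b hb0]
  by_cases hGe : Complex.Gamma e = 0
  · rcases eq_or_ne e 0 with h0 | h0
    · rw [h0]; simp [hGe]
    · rw [Complex.Gamma_add_one e h0, hGe]
      simp
  · have he0 : e ≠ 0 := fun h => hGe (by rw [h]; exact Complex.Gamma_zero)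
    rw [Complex.Gamma_add_one e he0]
    field_simp
end
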